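/- arXiv:2004.09016 — 7 statements merged into one kernel-verified Lean document; each statement's English description precedes it below -/
import Mathlib

section
/- Let n ≥ 1 and let a_1, …, a_n and r_1, …, r_n be positive integers such that 1 ≤ r_j < a_j and gcd(r_j, a_j) = 1 for every j. Then the following are equivalent: (i) a_1, …, a_n are not pairwise relatively prime (i.e. there exist indices s ≠ t with gcd(a_s, a_t) > 1); (ii) there exists an integer k such that a_j ∤ k·r_j for every j and, writing ρ_j for the unique integer with 1 ≤ ρ_j < a_j and ρ_j ≡ k·r_j (mod a_j), one has the strict inequality lcm(a_1, …, a_n) · (ρ_1 · ρ_2 ⋯ ρ_n) < a_1 · a_2 ⋯ a_n. -/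
/-!
If the moduli are pairwise coprime, then `lcm a = ∏ a` while `∏ ρ ≥ 1`, so the inequality cannot
be strict. Otherwise fix a maximal pairwise coprime set `O` of indices and start from `k` with
`k * r o ≡ 1 (mod a o)` for `o ∈ O`, so that `ρ o = 1` and the lcm over `O` is the product.
Every other index `j` shares a factor `q > 1` with some `a o`, and `q` is prime to `k * r j`.
Add these indices one at a time: with `Λ` the lcm so far and `g = gcd Λ (a j)`, move `k` inside
its class modulo `Λ` (which keeps the earlier `ρ`) so that `ρ j` is the least residue of `k * r j`
modulo `g`. It is positive because of `q` and smaller than `g`, hence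
`lcm Λ (a j) * ρ j < Λ * a j`, and every such step makes the inequality strict.
-/

open Finset

namespace Nat

theorem lcm_mul_lt_mul_of_lt_gcd {m n c : ℕ} (hm : 0 < m) (hn : 0 < n) (hc : c < gcd m n) :
    lcm m n * c < m * n := by
  refine Nat.lt_of_mul_lt_mul_left (a := gcd m n) ?_
  calc gcd m n * (lcm m n * c) = m * n * c := by rw [← mul_assoc, gcd_mul_lcm]
    _ < m * n * gcd m n := Nat.mul_lt_mul_of_pos_left hc (Nat.mul_pos hm hn)
    _ = gcd m n * (m * n) := mul_comm _ _

/-- As `k` runs through the class of `k'` modulo `Λ`, the residue of `k * r` modulo `b` runs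
through the whole class of `k' * r` modulo `gcd Λ b`; its least member is nonzero because of `q`. -/
theorem exists_modEq_mul_mod_pos_lt_gcd {Λ b r k' q : ℕ} (hb : 0 < b) (hr : Coprime r b)
    (hq : 1 < q) (hqΛ : q ∣ Λ) (hqb : q ∣ b) (hqk : Coprime q (k' * r)) :
    ∃ k, k ≡ k' [MOD Λ] ∧ 0 < k * r % b ∧ k * r % b < gcd Λ b := by
  set g := gcd Λ b
  have hgb : g ∣ b := gcd_dvd_right Λ b
  have hg : 0 < g := gcd_pos_of_pos_right Λ hb
  set c := k' * r % g
  have hc : c ≠ 0 := fun hc =>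
    hq.ne' (hqk.eq_one_of_dvd ((dvd_gcd hqΛ hqb).trans (dvd_of_mod_eq_zero hc)))
  obtain ⟨x, -, hx⟩ := exists_mul_mod_eq_of_coprime c hr hb.ne'
  have hxk : k' ≡ x [MOD g] := by
    refine ModEq.cancel_right_of_coprime (c := r) ?_ ?_
    · exact (Coprime.coprime_dvd_right hgb hr).symm
    · calc k' * r ≡ c [MOD g] := (mod_modEq _ _).symm
        _ ≡ r * x [MOD g] := (ModEq.of_dvd hgb hx).symm
        _ = x * r := mul_comm _ _
  obtain ⟨k, hkΛ, hkb⟩ := chineseRemainder' hxk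
  have hkr : k * r % b = c := by
    rw [hkb.mul_right r, mul_comm x, hx, mod_eq_of_lt ((mod_lt _ hg).trans_le (le_of_dvd hb hgb))]
  exact ⟨k, hkΛ, hkr ▸ pos_of_ne_zero hc, hkr ▸ mod_lt _ hg⟩

end Nat

open Function

section Residues

variable {ι : Type*} {a r : ι → ℕ}

theorem exists_maximal_pairwise_coprime [Finite ι] (a : ι → ℕ) :
    ∃ O : Finset ι, (O : Set ι).Pairwise (Nat.Coprime on a) ∧
      ∀ j ∉ O, ∃ o ∈ O, ¬ Nat.Coprime (a j) (a o) := by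
  classical
  obtain ⟨O, hO, hmax⟩ :=
    (Set.toFinite {O : Finset ι | (O : Set ι).Pairwise (Nat.Coprime on a)}).exists_maximal
      ⟨∅, by simp⟩
  refine ⟨O, hO, fun j hj => ?_⟩
  by_contra! hcop
  have hins : ((insert j O : Finset ι) : Set ι).Pairwise (Nat.Coprime on a) := by
    rw [coe_insert]
    exact hO.insert_of_notMem hj fun o ho => ⟨hcop o ho, (hcop o ho).symm⟩
  exact hj (hmax hins (subset_insert j O) (mem_insert_self j O))

theorem exists_mul_mod_eq_one_of_pairwise_coprime {O : Finset ι}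
    (hO : (O : Set ι).Pairwise (Nat.Coprime on a)) (ha : ∀ i ∈ O, 1 < a i)
    (hr : ∀ i ∈ O, Nat.Coprime (r i) (a i)) :
    ∃ k, ∀ i ∈ O, k * r i % a i = 1 := by
  have hinv : ∀ i ∈ O, ∃ m, r i * m % a i = 1 := fun i hi =>
    (Nat.exists_mul_mod_eq_one_of_coprime (hr i hi) (ha i hi)).imp fun _ h => h.2
  choose! m hm using hinv
  obtain ⟨k, hk⟩ := Nat.chineseRemainderOfFinset m a O (fun i hi => Nat.ne_zero_of_lt (ha i hi)) hO
  refine ⟨k, fun i hi => ?_⟩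
  rw [(hk i hi).mul_right (r i), mul_comm, hm i hi]

variable [DecidableEq ι]

theorem exists_insert_lcm_mul_prod_mod_lt {S : Finset ι} {j o : ι} {k' : ℕ} (hjS : j ∉ S)
    (hoS : o ∈ S) (hko : Nat.Coprime k' (a o)) (hjo : ¬ Nat.Coprime (a j) (a o)) (ha : ∀ i, 0 < a i)
    (hrj : Nat.Coprime (r j) (a j)) (hS : ∀ i ∈ S, 0 < k' * r i % a i) :
    ∃ k, (∀ i ∈ S, k * r i % a i = k' * r i % a i) ∧ 0 < k * r j % a j ∧
      (insert j S).lcm a * ∏ i ∈ insert j S, k * r i % a i <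
        a j * (S.lcm a * ∏ i ∈ S, k' * r i % a i) := by
  set q := Nat.gcd (a j) (a o)
  have hq : 1 < q := lt_of_le_of_ne (Nat.gcd_pos_of_pos_left _ (ha j)) (Ne.symm hjo)
  have hqk : Nat.Coprime q (k' * r j) :=
    Nat.Coprime.mul_right (hko.coprime_dvd_right (Nat.gcd_dvd_right _ _)).symm
      (hrj.coprime_dvd_right (Nat.gcd_dvd_left _ _)).symm
  obtain ⟨k, hkS, hpos, hlt⟩ := Nat.exists_modEq_mul_mod_pos_lt_gcd (ha j) hrj hq
    ((Nat.gcd_dvd_right _ _).trans (dvd_lcm hoS)) (Nat.gcd_dvd_left _ _) hqk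
  have hres : ∀ i ∈ S, k * r i % a i = k' * r i % a i := fun i hi =>
    (hkS.of_dvd (dvd_lcm hi)).mul_right (r i)
  refine ⟨k, hres, hpos, ?_⟩
  have hΛ : 0 < S.lcm a := Nat.pos_of_ne_zero fun h => by
    obtain ⟨i, -, hi⟩ := lcm_eq_zero_iff.mp h
    exact (ha i).ne' hi
  rw [lcm_insert, lcm_eq_nat_lcm, prod_insert hjS, prod_congr rfl hres, ← mul_assoc, ← mul_assoc,
    Nat.lcm_comm]
  exact Nat.mul_lt_mul_of_pos_right
    (by simpa [mul_comm (a j)] using Nat.lcm_mul_lt_mul_of_lt_gcd hΛ (ha j) hlt)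
    (prod_pos hS)

theorem exists_lcm_mul_prod_mod_le {O : Finset ι} (hO : (O : Set ι).Pairwise (Nat.Coprime on a))
    (hmax : ∀ j ∉ O, ∃ o ∈ O, ¬ Nat.Coprime (a j) (a o)) (ha : ∀ i, 1 < a i)
    (hr : ∀ i, Nat.Coprime (r i) (a i)) (T : Finset ι) (hT : Disjoint T O) :
    ∃ k, (∀ o ∈ O, k * r o % a o = 1) ∧ (∀ i ∈ O ∪ T, 0 < k * r i % a i) ∧
      (O ∪ T).lcm a * ∏ i ∈ O ∪ T, k * r i % a i ≤ ∏ i ∈ O ∪ T, a i ∧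
      (T.Nonempty → (O ∪ T).lcm a * ∏ i ∈ O ∪ T, k * r i % a i < ∏ i ∈ O ∪ T, a i) := by
  induction T using Finset.induction_on with
  | empty =>
    obtain ⟨k, hk⟩ := exists_mul_mod_eq_one_of_pairwise_coprime hO (fun i _ => ha i) fun i _ => hr i
    refine ⟨k, hk, fun i hi => ?_, ?_, by simp⟩
    · rw [union_empty] at hi
      rw [hk i hi]
      exact one_pos
    · rw [union_empty, prod_eq_one hk, mul_one, lcm_eq_prod hO]
  | @insert j T hjT ih =>
    obtain ⟨hjO, hTO⟩ := disjoint_insert_left.mp hT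
    obtain ⟨k', hk'O, hk'pos, hk'le, -⟩ := ih hTO
    obtain ⟨o, hoO, hjo⟩ := hmax j hjO
    have hko : Nat.Coprime k' (a o) := Nat.coprime_of_mul_modEq_one (r o) <| by
      rw [Nat.ModEq, hk'O o hoO, Nat.mod_eq_of_lt (ha o)]
    have hjS : j ∉ O ∪ T := by simp [hjO, hjT]
    obtain ⟨k, hres, hj, hlt⟩ := exists_insert_lcm_mul_prod_mod_lt hjS (mem_union_left T hoO) hko hjo
      (fun i => (ha i).le) (hr j) hk'pos
    have hlt' : (O ∪ insert j T).lcm a * ∏ i ∈ O ∪ insert j T, k * r i % a i <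
        ∏ i ∈ O ∪ insert j T, a i := by
      rw [union_insert, prod_insert (f := a) hjS]
      exact hlt.trans_le (Nat.mul_le_mul_left _ hk'le)
    refine ⟨k, fun o ho => (hres o (mem_union_left T ho)).trans (hk'O o ho), ?_, hlt'.le,
      fun _ => hlt'⟩
    intro i hi
    rw [union_insert] at hi
    rcases mem_insert.mp hi with rfl | hi
    · exact hj
    · exact (hres i hi).symm ▸ hk'pos i hi

theorem exists_mul_mod_pos_and_lcm_mul_prod_lt [Fintype ι] (ha : ∀ i, 1 < a i)
    (hr : ∀ i, Nat.Coprime (r i) (a i)) (h : ¬ Pairwise (Nat.Coprime on a)) :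
    ∃ k, (∀ i, 0 < k * r i % a i) ∧ univ.lcm a * ∏ i, k * r i % a i < ∏ i, a i := by
  obtain ⟨O, hO, hmax⟩ := exists_maximal_pairwise_coprime a
  have hN : (univ \ O).Nonempty := by
    rw [nonempty_iff_ne_empty, Ne, sdiff_eq_empty_iff_subset]
    exact fun hO' => h fun i j hij => hO (hO' (mem_univ i)) (hO' (mem_univ j)) hij
  obtain ⟨k, -, hpos, -, hlt⟩ := exists_lcm_mul_prod_mod_le hO hmax ha hr _ sdiff_disjoint
  rw [union_sdiff_of_subset (subset_univ O)] at hpos hlt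
  exact ⟨k, fun i => hpos i (mem_univ i), hlt hN⟩

end Residues

theorem stmt_1_general (n : ℕ) (a r : Fin n → ℕ)
    (hra : ∀ j, 1 ≤ r j ∧ r j < a j) (hcop : ∀ j, Nat.gcd (r j) (a j) = 1) :
    (∃ s t : Fin n, s ≠ t ∧ 1 < Nat.gcd (a s) (a t)) ↔
      ∃ k : ℤ, (∀ j, ¬ ((a j : ℤ) ∣ k * (r j : ℤ))) ∧
        ∃ ρ : Fin n → ℤ,
          (∀ j, 1 ≤ ρ j ∧ ρ j < (a j : ℤ) ∧ ρ j ≡ k * (r j : ℤ) [ZMOD (a j : ℕ)]) ∧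
          ((Finset.univ.lcm a : ℕ) : ℤ) * ∏ j, ρ j < ∏ j, (a j : ℤ) := by
  have ha : ∀ j, 1 < a j := fun j => (hra j).1.trans_lt (hra j).2
  have hgcd : (∃ s t : Fin n, s ≠ t ∧ 1 < Nat.gcd (a s) (a t)) ↔
      ¬ Pairwise (Nat.Coprime on a) := by
    simp only [Pairwise, onFun, Nat.Coprime, not_forall, exists_prop]
    refine exists₂_congr fun s t => and_congr_right fun _ => ?_
    have := Nat.gcd_pos_of_pos_left (a t) (ha s).le
    omega
  rw [hgcd]
  constructor
  · intro h
    obtain ⟨k, hpos, hlt⟩ := exists_mul_mod_pos_and_lcm_mul_prod_lt ha hcop h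
    refine ⟨k, fun j hdvd => ?_, fun j => (k * r j % a j : ℕ), fun j => ⟨?_, ?_, ?_⟩, ?_⟩
    · exact (hpos j).ne' (Nat.mod_eq_zero_of_dvd (by exact_mod_cast hdvd))
    all_goals dsimp only
    · exact_mod_cast hpos j
    · exact_mod_cast Nat.mod_lt _ (ha j).le
    · push_cast
      exact Int.mod_modEq _ _
    · exact_mod_cast hlt
  · rintro ⟨k, -, ρ, hρ, hlt⟩ hpw
    rw [lcm_eq_prod fun i _ j _ hij => hpw hij] at hlt
    have hρ1 : 1 ≤ ∏ j, ρ j := one_le_prod fun j _ => (hρ j).1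
    push_cast at hlt
    exact hlt.not_ge (le_mul_of_one_le_right (prod_nonneg fun j _ => by positivity) hρ1)

/-- Lemma 5.2 ("moreover" part): under the hypotheses of the first part,
the moduli `a 1, …, a n` fail to be pairwise relatively prime if and only if
the witness `k` can be chosen so that the inequality
`lcm (a 1, …, a n) * ∏ ρ j ≤ ∏ a j` is strict. -/
theorem stmt_1 (n : ℕ) (hn : 1 ≤ n) (a r : Fin n → ℕ)
    (hra : ∀ j, 1 ≤ r j ∧ r j < a j) (hcop : ∀ j, Nat.gcd (r j) (a j) = 1) :
    (∃ s t : Fin n, s ≠ t ∧ 1 < Nat.gcd (a s) (a t)) ↔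
      ∃ k : ℤ, (∀ j, ¬ ((a j : ℤ) ∣ k * (r j : ℤ))) ∧
        ∃ ρ : Fin n → ℤ,
          (∀ j, 1 ≤ ρ j ∧ ρ j < (a j : ℤ) ∧ ρ j ≡ k * (r j : ℤ) [ZMOD (a j : ℕ)]) ∧
          ((Finset.univ.lcm a : ℕ) : ℤ) * ∏ j, ρ j < ∏ j, (a j : ℤ) :=
  stmt_1_general n a r hra hcop
end

section
/- Let n ≥ 1 and let a_1, …, a_n and r_1, …, r_n be positive integers such that 1 ≤ r_j < a_j and gcd(r_j, a_j) = 1 for every j, and fix an index t ∈ {1, …, n}. Then there exists an integer k such that k·r_t ≡ 1 (mod a_t), a_j ∤ k·r_j for every j, and, writing ρ_j for the unique integer with 1 ≤ ρ_j < a_j and ρ_j ≡ k·r_j (mod a_j), one has lcm(a_1, …, a_n) · (ρ_1 · ρ_2 ⋯ ρ_n) ≤ a_1 · a_2 ⋯ a_n. -/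
/-!
Make the `t`-th residue `1`; this fixes `k` modulo `a t`, say `k = k₀ + a t * z`. For `j ≠ t` put
`g j = gcd (a j) (a t)`. As `z` varies, the residue of `k * r j` modulo `a j` is `c j + g j * τ j`,
where `0 ≤ c j < g j` is fixed and `τ j` is the residue modulo `a j / g j` of an affine function of
`z` with unit slope. Since `lcm a ∣ a t * lcm_{j ≠ t} (a j / g j)` and
`∏ a = a t * ∏_{j ≠ t} g j * (a j / g j)`, the bound follows by induction on the number of moduli,
provided a residue that may vanish is weighted by residue `+ 1`: then `c + g * τ + 1 ≤ g * (τ + 1)`.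
A residue that must not vanish has `c j ≠ 0` unless `g j = 1`, because `k₀` is a unit modulo `a t`;
such indices stay constrained in the reduced problem.
-/

open Finset

theorem Int.add_mul_emod_mul {g A : ℤ} (hg : 0 < g) (hA : 0 < A) (x z : ℤ) :
    (x + g * z) % (g * A) = x % g + g * ((x / g + z) % A) := by
  have hx := Int.mul_ediv_add_emod x g
  have hw := Int.mul_ediv_add_emod (x / g + z) A
  have hsplit : x + g * z = (x % g + g * ((x / g + z) % A)) + g * A * ((x / g + z) / A) := by
    linear_combination -hx - g * hw
  rw [hsplit, Int.add_mul_emod_self_left]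
  have := Int.emod_nonneg x hg.ne'
  have := Int.emod_lt_of_pos x hg
  have := Int.emod_nonneg (x / g + z) hA.ne'
  have := Int.emod_lt_of_pos (x / g + z) hA
  exact Int.emod_eq_of_lt (by positivity) (by nlinarith)

theorem Int.mul_add_emod_eq_emod_gcd_add {b c : ℕ} (hb : 0 < b) (hc : 0 < c) (u y z e : ℤ) :
    (u * (y + c * z) + e) % b = (u * y + e) % (b.gcd c) +
      b.gcd c * ((u * (c / b.gcd c : ℕ) * z + (u * y + e) / b.gcd c) % (b / b.gcd c : ℕ)) := by
  have hg := Nat.gcd_pos_of_pos_right b hc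
  have hb' : (b : ℤ) = b.gcd c * (b / b.gcd c : ℕ) := by
    exact_mod_cast (Nat.mul_div_cancel' (Nat.gcd_dvd_left b c)).symm
  have hc' : (c : ℤ) = b.gcd c * (c / b.gcd c : ℕ) := by
    exact_mod_cast (Nat.mul_div_cancel' (Nat.gcd_dvd_right b c)).symm
  rw [add_comm (u * _ * z), hb', ← Int.add_mul_emod_mul (by exact_mod_cast hg)
    (by exact_mod_cast Nat.div_pos (Nat.gcd_le_left c hb) hg), hc']
  ring_nf

theorem Int.exists_dvd_and_mul_add_emod_eq {u m N : ℤ} (hu : IsCoprime u m) (hN : IsCoprime N m)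
    (e : ℤ) {v : ℤ} (hv₀ : 0 ≤ v) (hvm : v < m) : ∃ y, N ∣ y ∧ (u * y + e) % m = v := by
  obtain ⟨p, q, hpq⟩ := hu.mul_left hN
  refine ⟨N * (p * (v - e)), dvd_mul_right _ _, ?_⟩
  have hmod : u * (N * (p * (v - e))) + e ≡ v [ZMOD m] :=
    Int.modEq_iff_dvd.mpr ⟨(v - e) * q, by linear_combination (e - v) * hpq⟩
  exact hmod.eq.trans (Int.emod_eq_of_lt hv₀ hvm)

theorem Int.isCoprime_of_mul_add_emod_eq_one {u y e m : ℤ} (h : (u * y + e) % m = 1)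
    (he : m ∣ e) : IsCoprime y m := by
  obtain ⟨c, rfl⟩ := he
  have := Int.mul_ediv_add_emod (u * y + m * c) m
  exact ⟨u, c - (u * y + m * c) / m, by linear_combination h - this⟩

theorem Int.emod_ne_zero_of_isCoprime {x g : ℤ} (hx : IsCoprime x g) (hg : ¬IsUnit g) :
    x % g ≠ 0 :=
  fun h => hg (hx.isUnit_of_dvd' (Int.dvd_of_emod_eq_zero h) dvd_rfl)

theorem Int.mul_add_emod_gcd_ne_zero {b c : ℕ} {u y e : ℤ} (hu : IsCoprime u b)
    (hy : IsCoprime y c) (he : (b : ℤ) ∣ e) (hbc : ¬b.Coprime c) :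
    (u * y + e) % (b.gcd c) ≠ 0 := by
  have hb : ((b.gcd c : ℕ) : ℤ) ∣ b := Int.natCast_dvd_natCast.mpr (Nat.gcd_dvd_left b c)
  have hc : ((b.gcd c : ℕ) : ℤ) ∣ c := Int.natCast_dvd_natCast.mpr (Nat.gcd_dvd_right b c)
  obtain ⟨k, rfl⟩ := hb.trans he
  refine Int.emod_ne_zero_of_isCoprime (IsCoprime.add_mul_left_left ?_ k) ?_
  · exact (hu.of_isCoprime_of_dvd_right hb).mul_left (hy.of_isCoprime_of_dvd_right hc)
  · rwa [Int.isUnit_iff_natAbs_eq, Int.natAbs_natCast]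

theorem Int.isCoprime_mul_div_gcd {u : ℤ} {b c : ℕ} (hu : IsCoprime u b) (hc : 0 < c) :
    IsCoprime (u * (c / b.gcd c : ℕ)) (b / b.gcd c : ℕ) := by
  have hdiv : ((b / b.gcd c : ℕ) : ℤ) ∣ b :=
    Int.natCast_dvd_natCast.mpr (Nat.div_dvd_of_dvd (Nat.gcd_dvd_left b c))
  have hcop := Nat.coprime_div_gcd_div_gcd (Nat.gcd_pos_of_pos_right b hc)
  exact (hu.of_isCoprime_of_dvd_right hdiv).mul_left (Nat.isCoprime_iff_coprime.mpr hcop.symm)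

variable {ι : Type*} [DecidableEq ι]

theorem Finset.lcm_dvd_mul_lcm_div_gcd (J : Finset ι) (s : ι) (a : ι → ℕ) :
    J.lcm a ∣ a s * (J.erase s).lcm (fun j => a j / (a j).gcd (a s)) := by
  refine Finset.lcm_dvd fun j hj => ?_
  by_cases hjs : j = s
  · exact hjs ▸ dvd_mul_right _ _
  · rw [← Nat.mul_div_cancel' (Nat.gcd_dvd_left (a j) (a s))]
    exact mul_dvd_mul (Nat.gcd_dvd_right _ _) (Finset.dvd_lcm (mem_erase.mpr ⟨hjs, hj⟩))

theorem Finset.lcm_mul_prod_le_of_le_gcd_mul {J : Finset ι} {s : ι} (hs : s ∈ J) {a : ι → ℕ}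
    (ha : ∀ j ∈ J, 0 < a j) {w w' : ι → ℤ} (hws : w s = 1) (hw₀ : ∀ j ∈ J.erase s, 0 ≤ w j)
    (hw : ∀ j ∈ J.erase s, w j ≤ (a j).gcd (a s) * w' j)
    (hw' : (((J.erase s).lcm (fun j => a j / (a j).gcd (a s)) : ℕ) : ℤ) * ∏ j ∈ J.erase s, w' j ≤
      ∏ j ∈ J.erase s, ((a j / (a j).gcd (a s) : ℕ) : ℤ)) :
    ((J.lcm a : ℕ) : ℤ) * ∏ j ∈ J, w j ≤ ∏ j ∈ J, (a j : ℤ) := by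
  set g : ι → ℕ := fun j => (a j).gcd (a s)
  set A : ι → ℕ := fun j => a j / g j
  have hgA : ∀ j, (g j : ℤ) * A j = a j := fun j => by
    exact_mod_cast Nat.mul_div_cancel' (Nat.gcd_dvd_left (a j) (a s))
  have hlcm : ((J.lcm a : ℕ) : ℤ) ≤ a s * ((J.erase s).lcm A : ℕ) := by
    have hA : ∀ j ∈ J.erase s, A j ≠ 0 := fun j hj =>
      (Nat.div_pos (Nat.gcd_le_left _ (ha j (mem_of_mem_erase hj)))
        (Nat.gcd_pos_of_pos_right _ (ha s hs))).ne'
    have hpos : 0 < a s * (J.erase s).lcm A :=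
      Nat.mul_pos (ha s hs) (Nat.pos_of_ne_zero (by simpa [Finset.lcm_eq_zero_iff] using hA))
    exact_mod_cast Nat.le_of_dvd hpos (J.lcm_dvd_mul_lcm_div_gcd s a)
  have hprod : ∏ j ∈ J.erase s, w j ≤ (∏ j ∈ J.erase s, (g j : ℤ)) * ∏ j ∈ J.erase s, w' j := by
    rw [← prod_mul_distrib]
    exact prod_le_prod hw₀ hw
  rw [← mul_prod_erase J w hs, ← mul_prod_erase J (fun j => (a j : ℤ)) hs, hws, one_mul]
  calc ((J.lcm a : ℕ) : ℤ) * ∏ j ∈ J.erase s, w j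
      ≤ (a s * ((J.erase s).lcm A : ℕ)) * ((∏ j ∈ J.erase s, (g j : ℤ)) * ∏ j ∈ J.erase s, w' j) :=
        mul_le_mul hlcm hprod (prod_nonneg hw₀) (by positivity)
    _ = (a s * ∏ j ∈ J.erase s, (g j : ℤ)) * (((J.erase s).lcm A : ℕ) * ∏ j ∈ J.erase s, w' j) := by
        ring
    _ ≤ (a s * ∏ j ∈ J.erase s, (g j : ℤ)) * ∏ j ∈ J.erase s, (A j : ℤ) :=
        mul_le_mul_of_nonneg_left hw' (by positivity)
    _ = a s * ∏ j ∈ J.erase s, (a j : ℤ) := by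
        rw [mul_assoc, ← prod_mul_distrib]
        simp only [hgA]

/-- Hypotheses on the affine residues `u j * y + e j` modulo `a j`, `j ∈ J`; those with `j ∈ F` are
to be made nonzero. -/
structure IsAdmissible (J F : Finset ι) (a : ι → ℕ) (u e : ι → ℤ) : Prop where
  subset : F ⊆ J
  pos : ∀ j ∈ J, 0 < a j
  isCoprime : ∀ j ∈ J, IsCoprime (u j) (a j)
  one_lt : ∀ j ∈ F, 1 < a j
  dvd : ∀ j ∈ F, (a j : ℤ) ∣ e j

def IsSmallMultiplier (J F : Finset ι) (a : ι → ℕ) (u e : ι → ℤ) (y : ℤ) : Prop :=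
  (∀ j ∈ F, (u j * y + e j) % a j ≠ 0) ∧
    ((J.lcm a : ℕ) : ℤ) * ∏ j ∈ J, ((u j * y + e j) % a j + if j ∈ F then 0 else 1) ≤
      ∏ j ∈ J, (a j : ℤ)

namespace IsAdmissible

variable {J F : Finset ι} {a : ι → ℕ} {u e : ι → ℤ} {s : ι}

theorem exists_reduction (h : IsAdmissible J F a u e) (hs : s ∈ J) :
    ∃ y₀ : ℤ, (u s * y₀ + e s) % a s = (if s ∈ F then 1 else 0) ∧
      IsAdmissible (J.erase s) ((F.erase s).filter fun j => (a j).Coprime (a s))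
        (fun j => a j / (a j).gcd (a s)) (fun j => u j * (a s / (a j).gcd (a s) : ℕ))
        (fun j => (u j * y₀ + e j) / (a j).gcd (a s)) := by
  set F' := (F.erase s).filter fun j => (a j).Coprime (a s)
  have hs₀ := h.pos s hs
  have hF' : ∀ j ∈ F', j ∈ F ∧ (a j).gcd (a s) = 1 := fun j hj =>
    ⟨mem_of_mem_erase (mem_filter.mp hj).1, (mem_filter.mp hj).2⟩
  have hN : IsCoprime (∏ j ∈ F', (a j : ℤ)) (a s) := by
    rw [← Nat.cast_prod]
    exact Nat.isCoprime_iff_coprime.mpr (Nat.Coprime.prod_left fun j hj => (hF' j hj).2)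
  -- divisibility of `y₀` by the moduli of `F'` makes their shifts vanish in the reduced problem
  obtain ⟨y₀, hy₀N, hy₀⟩ := Int.exists_dvd_and_mul_add_emod_eq (h.isCoprime s hs) hN (e s)
    (v := if s ∈ F then 1 else 0) (by positivity) (by
      split_ifs with hsF
      exacts [by exact_mod_cast h.one_lt s hsF, by exact_mod_cast hs₀])
  refine ⟨y₀, hy₀,
    { subset := (filter_subset _ _).trans (erase_subset_erase s h.subset)
      pos := fun j hj => Nat.div_pos (Nat.gcd_le_left _ (h.pos j (mem_of_mem_erase hj)))
        (Nat.gcd_pos_of_pos_right _ hs₀)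
      isCoprime := fun j hj => Int.isCoprime_mul_div_gcd (h.isCoprime j (mem_of_mem_erase hj)) hs₀
      one_lt := fun j hj => by simpa [(hF' j hj).2] using h.one_lt j (hF' j hj).1
      dvd := fun j hj => ?_ }⟩
  simp only [(hF' j hj).2, Nat.div_one, Nat.cast_one, Int.ediv_one]
  exact dvd_add (dvd_mul_of_dvd_right ((dvd_prod_of_mem _ hj).trans hy₀N) _) (h.dvd j (hF' j hj).1)

theorem isSmallMultiplier_add_mul (h : IsAdmissible J F a u e) (hs : s ∈ J)
    (hsF : F.Nonempty → s ∈ F) {y₀ z : ℤ} (hy₀ : (u s * y₀ + e s) % a s = if s ∈ F then 1 else 0)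
    (hz : IsSmallMultiplier (J.erase s) ((F.erase s).filter fun j => (a j).Coprime (a s))
      (fun j => a j / (a j).gcd (a s)) (fun j => u j * (a s / (a j).gcd (a s) : ℕ))
      (fun j => (u j * y₀ + e j) / (a j).gcd (a s)) z) :
    (u s * (y₀ + a s * z) + e s) % a s = (if s ∈ F then 1 else 0) ∧
      IsSmallMultiplier J F a u e (y₀ + a s * z) := by
  set g : ι → ℕ := fun j => (a j).gcd (a s)
  set A : ι → ℕ := fun j => a j / g j
  set F' := (F.erase s).filter fun j => (a j).Coprime (a s)
  obtain ⟨hzF', hz⟩ := hz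
  have hs₀ := h.pos s hs
  have hg : ∀ j, (0 : ℤ) < g j := fun j => by exact_mod_cast Nat.gcd_pos_of_pos_right _ hs₀
  have hA : ∀ j ∈ J, (0 : ℤ) < A j := fun j hj => by
    exact_mod_cast Nat.div_pos (Nat.gcd_le_left _ (h.pos j hj)) (Nat.gcd_pos_of_pos_right _ hs₀)
  have hF' : ∀ j ∈ F', j ∈ F ∧ (a j).gcd (a s) = 1 := fun j hj =>
    ⟨mem_of_mem_erase (mem_filter.mp hj).1, (mem_filter.mp hj).2⟩
  have hres : ∀ j ∈ J, (u j * (y₀ + a s * z) + e j) % a j = (u j * y₀ + e j) % g j +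
      g j * ((u j * (a s / g j : ℕ) * z + (u j * y₀ + e j) / g j) % A j) := fun j hj =>
    Int.mul_add_emod_eq_emod_gcd_add (h.pos j hj) hs₀ _ _ _ _
  have hys : (u s * (y₀ + a s * z) + e s) % a s = if s ∈ F then 1 else 0 := by
    rw [show u s * (y₀ + a s * z) + e s = u s * y₀ + e s + a s * (u s * z) by ring,
      Int.add_mul_emod_self_left, hy₀]
  refine ⟨hys, fun j hj => ?_, ?_⟩
  · by_cases hjs : j = s
    · rw [hjs, hys, if_pos (hjs ▸ hj)]
      exact one_ne_zero
    rw [hres j (h.subset hj)]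
    by_cases hjF' : j ∈ F'
    · simpa [g, (hF' j hjF').2] using hzF' j hjF'
    have hsF := hsF ⟨j, hj⟩
    rw [if_pos hsF] at hy₀
    -- `y₀` is a unit modulo `a s`, so a required residue has a nonzero fixed part unless `g j = 1`
    have hc := Int.mul_add_emod_gcd_ne_zero (h.isCoprime j (h.subset hj)) (y := y₀)
      (Int.isCoprime_of_mul_add_emod_eq_one hy₀ (h.dvd s hsF)) (h.dvd j hj)
      (fun hcop => hjF' (mem_filter.mpr ⟨mem_erase.mpr ⟨hjs, hj⟩, hcop⟩))
    have hc₀ := Int.emod_nonneg (u j * y₀ + e j) (hg j).ne'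
    have hτ₀ := Int.emod_nonneg (u j * (a s / g j : ℕ) * z + (u j * y₀ + e j) / g j)
      (hA j (h.subset hj)).ne'
    exact (add_pos_of_pos_of_nonneg (lt_of_le_of_ne hc₀ (Ne.symm hc))
      (mul_nonneg (hg j).le hτ₀)).ne'
  · refine Finset.lcm_mul_prod_le_of_le_gcd_mul hs h.pos (by rw [hys]; split_ifs <;> rfl)
      (fun j hj => add_nonneg
        (Int.emod_nonneg _ (by exact_mod_cast (h.pos j (mem_of_mem_erase hj)).ne'))
        (by split_ifs <;> norm_num)) (fun j hj => ?_) hz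
    rw [hres j (mem_of_mem_erase hj)]
    by_cases hjF' : j ∈ F'
    · simp [g, A, (hF' j hjF').2, (hF' j hjF').1, hjF']
    have hc := Int.emod_lt_of_pos (u j * y₀ + e j) (hg j)
    have hδ : (if j ∈ F then 0 else 1 : ℤ) ≤ 1 := by split_ifs <;> norm_num
    rw [if_neg hjF', mul_add, mul_one]
    linarith

theorem exists_emod_eq_and_isSmallMultiplier (h : IsAdmissible J F a u e) (hs : s ∈ J)
    (hsF : F.Nonempty → s ∈ F)
    (hJ : ∀ F' a' u' e', IsAdmissible (J.erase s) F' a' u' e' →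
      ∃ z, IsSmallMultiplier (J.erase s) F' a' u' e' z) :
    ∃ y, (u s * y + e s) % a s = (if s ∈ F then 1 else 0) ∧ IsSmallMultiplier J F a u e y := by
  obtain ⟨y₀, hy₀, hred⟩ := h.exists_reduction hs
  obtain ⟨z, hz⟩ := hJ _ _ _ _ hred
  exact ⟨y₀ + a s * z, h.isSmallMultiplier_add_mul hs hsF hy₀ hz⟩

theorem exists_isSmallMultiplier (h : IsAdmissible J F a u e) :
    ∃ y, IsSmallMultiplier J F a u e y := by
  induction J using Finset.strongInduction generalizing F a u e with
  | H J ih =>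
  rcases J.eq_empty_or_nonempty with rfl | ⟨s₀, hs₀⟩
  · exact ⟨0, fun j hj => absurd (h.subset hj) (notMem_empty j), by simp⟩
  obtain ⟨s, hs, hsF⟩ : ∃ s ∈ J, F.Nonempty → s ∈ F := by
    rcases F.eq_empty_or_nonempty with rfl | ⟨s, hs⟩
    · exact ⟨s₀, hs₀, fun hF => absurd hF not_nonempty_empty⟩
    · exact ⟨s, h.subset hs, fun _ => hs⟩
  obtain ⟨y, -, hy⟩ := h.exists_emod_eq_and_isSmallMultiplier hs hsF
    fun _ _ _ _ h' => ih _ (erase_ssubset hs) h'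
  exact ⟨y, hy⟩

end IsAdmissible

theorem stmt_4_general (n : ℕ) (a r : Fin n → ℕ)
    (hra : ∀ j, 1 ≤ r j ∧ r j < a j) (hcop : ∀ j, Nat.gcd (r j) (a j) = 1)
    (t : Fin n) :
    ∃ k : ℤ, k * (r t : ℤ) ≡ 1 [ZMOD (a t : ℕ)] ∧
      (∀ j, ¬ ((a j : ℤ) ∣ k * (r j : ℤ))) ∧
      ∃ ρ : Fin n → ℤ,
        (∀ j, 1 ≤ ρ j ∧ ρ j < (a j : ℤ) ∧ ρ j ≡ k * (r j : ℤ) [ZMOD (a j : ℕ)]) ∧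
        ((Finset.univ.lcm a : ℕ) : ℤ) * ∏ j, ρ j ≤ ∏ j, (a j : ℤ) := by
  have ha : ∀ j, 1 < a j := fun j => (hra j).1.trans_lt (hra j).2
  have ha' : ∀ j, (1 : ℤ) < a j := fun j => by exact_mod_cast ha j
  have h : IsAdmissible univ univ a (fun j => r j) 0 :=
    { subset := subset_rfl
      pos := fun j _ => zero_lt_one.trans (ha j)
      isCoprime := fun j _ => Nat.isCoprime_iff_coprime.mpr (hcop j)
      one_lt := fun j _ => ha j
      dvd := fun j _ => dvd_zero _ }
  obtain ⟨k, hkt, hk0, hk⟩ := h.exists_emod_eq_and_isSmallMultiplier (mem_univ t)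
    (fun _ => mem_univ t) fun _ _ _ _ h' => h'.exists_isSmallMultiplier
  simp only [Pi.zero_apply, add_zero, mem_univ, if_true, true_implies] at hkt hk0 hk
  refine ⟨k, ?_, fun j hj => hk0 j (Int.emod_eq_zero_of_dvd (mul_comm k _ ▸ hj)),
    fun j => r j * k % a j, fun j => ⟨?_, Int.emod_lt_of_pos _ (by linarith [ha' j]),
      mul_comm k _ ▸ Int.mod_modEq _ _⟩, hk⟩
  · rw [Int.ModEq, mul_comm, hkt, Int.emod_eq_of_lt zero_le_one (ha' t)]
  · exact lt_of_le_of_ne (Int.emod_nonneg _ (by linarith [ha' j])) (hk0 j).symm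

/-- Strengthening of the first part of Lemma 5.2: the witness `k` can in
addition be chosen so that `k * r t ≡ 1 (mod a t)` for any prescribed index
`t`. -/
theorem stmt_4 (n : ℕ) (hn : 1 ≤ n) (a r : Fin n → ℕ)
    (hra : ∀ j, 1 ≤ r j ∧ r j < a j) (hcop : ∀ j, Nat.gcd (r j) (a j) = 1)
    (t : Fin n) :
    ∃ k : ℤ, k * (r t : ℤ) ≡ 1 [ZMOD (a t : ℕ)] ∧
      (∀ j, ¬ ((a j : ℤ) ∣ k * (r j : ℤ))) ∧
      ∃ ρ : Fin n → ℤ,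
        (∀ j, 1 ≤ ρ j ∧ ρ j < (a j : ℤ) ∧ ρ j ≡ k * (r j : ℤ) [ZMOD (a j : ℕ)]) ∧
        ((Finset.univ.lcm a : ℕ) : ℤ) * ∏ j, ρ j ≤ ∏ j, (a j : ℤ) :=
  stmt_4_general n a r hra hcop t
end

section
/- Let m ≥ 1, let k_1, …, k_m ≥ 1 be integers with n = k_1 + ⋯ + k_m, and let Λ be the n × n block-diagonal matrix whose j-th block is the k_j × k_j upper-triangular Jordan block with eigenvalue λ_j, where each λ_j ∈ ℂ is a primitive d_j-th root of unity (d_j ≥ 1, i.e. λ_j has multiplicative order exactly d_j). Then for a positive integer q the following are equivalent: (i) there exists x ∈ ℂ^n with x ≠ 0, Λ^q x = x, and Λ^p x ≠ x for every integer p with 0 < p < q; (ii) there exists a nonempty subset S ⊆ {1, …, m} with q = lcm of {d_j : j ∈ S}. -/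
/-!
Write each Jordan block as `λ • 1 + N` with `N` the nilpotent upper shift. The fixed space of
`(λ • 1 + N) ^ p` (`p > 0`) is `N`-invariant, and on a fixed vector `w` with `N (N w) = 0` the binomial
formula `(λ • 1 + N) ^ p w = λ ^ p w + p λ ^ (p - 1) N w` forces `N w = 0`; descending along the powers
of `N` shows that every fixed vector lies in `ker N`, where `(λ • 1 + N) ^ p` acts as `λ ^ p`.
So `Λ ^ p x = x` iff every block of `x` lies in the kernel of its shift and `d j ∣ p` for every
block `j` on which `x` is nonzero, and the minimal period of such an `x` is the lcm of those `d j`.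
-/

/-- The `k × k` upper-triangular Jordan block with eigenvalue `lam`:
`lam` on the diagonal, `1` on the superdiagonal, `0` elsewhere. -/
def jordanBlock (k : ℕ) (lam : ℂ) : Matrix (Fin k) (Fin k) ℂ :=
  fun i j => if (j : ℕ) = (i : ℕ) then lam
    else if (j : ℕ) = (i : ℕ) + 1 then 1 else 0

open Matrix

section ScalarAddNilpotent

variable {n : Type*} [Fintype n] [DecidableEq n]

section CommRing

variable {R : Type*} [CommRing R] {N : Matrix n n R}

theorem smul_one_add_pow_mulVec_of_mulVec_mulVec_eq_zero (c : R) {w : n → R}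
    (hw : N *ᵥ (N *ᵥ w) = 0) (p : ℕ) :
    (c • 1 + N) ^ p *ᵥ w = c ^ p • w + ((p : R) * c ^ (p - 1)) • (N *ᵥ w) := by
  induction p generalizing w with
  | zero => simp
  | succ p ih =>
    have hNw : N *ᵥ (N *ᵥ (N *ᵥ w)) = 0 := by rw [hw, mulVec_zero]
    rw [pow_succ, ← mulVec_mulVec, add_mulVec, smul_mulVec, one_mulVec, mulVec_add,
      mulVec_smul, ih hw, ih hNw, hw, smul_zero, add_zero]
    rcases p with _ | p
    · simp
    · simp only [Nat.add_sub_cancel, Nat.cast_add, Nat.cast_one, smul_add, smul_smul, pow_succ]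
      module

theorem smul_one_add_pow_mulVec_mulVec_eq_self {c : R} {p : ℕ} {w : n → R}
    (hw : (c • 1 + N) ^ p *ᵥ w = w) : (c • 1 + N) ^ p *ᵥ (N *ᵥ w) = N *ᵥ w := by
  have hcomm : Commute ((c • 1 + N) ^ p) N :=
    (((Commute.one_left N).smul_left c).add_left (Commute.refl N)).pow_left p
  rw [mulVec_mulVec, hcomm.eq, ← mulVec_mulVec, hw]

end CommRing

variable {K : Type*} [Field K] [CharZero K] {N : Matrix n n K} {p : ℕ}

theorem mulVec_eq_zero_of_smul_one_add_pow_mulVec_eq_self {c : K} (hp : p ≠ 0) {w : n → K}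
    (hw : (c • 1 + N) ^ p *ᵥ w = w) (hN2 : N *ᵥ (N *ᵥ w) = 0) : N *ᵥ w = 0 := by
  have hNw := smul_one_add_pow_mulVec_mulVec_eq_self hw
  rw [smul_one_add_pow_mulVec_of_mulVec_mulVec_eq_zero c (by rw [hN2, mulVec_zero]), hN2,
    smul_zero, add_zero] at hNw
  rw [smul_one_add_pow_mulVec_of_mulVec_mulVec_eq_zero c hN2] at hw
  by_contra hne
  have hc : c ^ p = 1 := by
    have : (c ^ p - 1) • (N *ᵥ w) = 0 := by rw [sub_smul, hNw, one_smul, sub_self]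
    exact sub_eq_zero.1 ((smul_eq_zero.1 this).resolve_right hne)
  have hcoef : (p : K) * c ^ (p - 1) ≠ 0 :=
    mul_ne_zero (Nat.cast_ne_zero.2 hp) (pow_ne_zero _ (left_ne_zero_of_mul_eq_one (by
      rwa [← pow_succ', Nat.sub_add_cancel (Nat.one_le_iff_ne_zero.2 hp)])))
  rw [hc, one_smul, add_eq_left, smul_eq_zero] at hw
  exact hw.elim hcoef hne

theorem smul_one_add_pow_mulVec_eq_self_iff (c : K) (hN : IsNilpotent N) (hp : p ≠ 0)
    (v : n → K) : (c • 1 + N) ^ p *ᵥ v = v ↔ N *ᵥ v = 0 ∧ (c ^ p = 1 ∨ v = 0) := by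
  constructor
  · intro hv
    obtain ⟨r, hr⟩ := hN
    have descent (s : ℕ) :
        ∀ w, (c • 1 + N) ^ p *ᵥ w = w → N ^ (s + 1) *ᵥ w = 0 → N *ᵥ w = 0 := by
      induction s with
      | zero => simp
      | succ s ih =>
        intro w hw hs
        refine mulVec_eq_zero_of_smul_one_add_pow_mulVec_eq_self hp hw
          (ih _ (smul_one_add_pow_mulVec_mulVec_eq_self hw) ?_)
        rw [mulVec_mulVec, ← pow_succ, hs]
    have hNv : N *ᵥ v = 0 := descent r v hv (by rw [pow_succ, hr, zero_mul, zero_mulVec])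
    rw [smul_one_add_pow_mulVec_of_mulVec_mulVec_eq_zero c (by rw [hNv, mulVec_zero]), hNv,
      smul_zero, add_zero] at hv
    refine ⟨hNv, ?_⟩
    have : (c ^ p - 1) • v = 0 := by rw [sub_smul, hv, one_smul, sub_self]
    simpa [sub_eq_zero] using this
  · rintro ⟨hNv, hc | rfl⟩
    · rw [smul_one_add_pow_mulVec_of_mulVec_mulVec_eq_zero c (by rw [hNv, mulVec_zero]), hNv, hc]
      simp
    · exact mulVec_zero _

end ScalarAddNilpotent

def upperShift (R : Type*) [Zero R] [One R] (k : ℕ) : Matrix (Fin k) (Fin k) R :=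
  fun i j => if (j : ℕ) = i + 1 then 1 else 0

section UpperShift

variable {R : Type*} [Semiring R] {k : ℕ}

theorem upperShift_mulVec_apply (y : Fin k → R) (i : Fin k) :
    (upperShift R k *ᵥ y) i = if h : (i : ℕ) + 1 < k then y ⟨i + 1, h⟩ else 0 := by
  simp only [mulVec, dotProduct, upperShift, ite_mul, one_mul, zero_mul]
  split_ifs with h
  · rw [Fintype.sum_eq_single ⟨i + 1, h⟩ fun j hj => if_neg fun h' => hj (Fin.ext h'),
      if_pos rfl]
  · exact Finset.sum_eq_zero fun j _ => if_neg (by omega)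

theorem upperShift_pow_mulVec_apply (r : ℕ) (y : Fin k → R) (i : Fin k) :
    (upperShift R k ^ r *ᵥ y) i = if h : (i : ℕ) + r < k then y ⟨i + r, h⟩ else 0 := by
  induction r generalizing y with
  | zero => simp
  | succ r ih =>
    rw [pow_succ, ← mulVec_mulVec, ih]
    split_ifs with h₁ h₂ h₂
    · rw [upperShift_mulVec_apply]; exact dif_pos h₂
    · rw [upperShift_mulVec_apply]; exact dif_neg h₂
    · omega
    · rfl

theorem isNilpotent_upperShift : IsNilpotent (upperShift R k) :=
  ⟨k, ext_iff_mulVec.2 fun y => funext fun i => by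
    rw [upperShift_pow_mulVec_apply, dif_neg (by omega), zero_mulVec]; rfl⟩

theorem upperShift_mulVec_eq_zero {y : Fin k → R} (hy : ∀ i : Fin k, (i : ℕ) ≠ 0 → y i = 0) :
    upperShift R k *ᵥ y = 0 := by
  funext i
  rw [upperShift_mulVec_apply]
  split_ifs
  exacts [hy _ (Nat.succ_ne_zero _), rfl]

end UpperShift

theorem jordanBlock_eq_smul_one_add_upperShift (k : ℕ) (lam : ℂ) :
    jordanBlock k lam = lam • 1 + upperShift ℂ k := by
  ext i j
  simp only [jordanBlock, upperShift, Matrix.add_apply, Matrix.smul_apply, Matrix.one_apply,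
    Fin.ext_iff, smul_eq_mul]
  split_ifs <;> first | omega | simp

theorem jordanBlock_pow_mulVec_eq_self_iff {k d : ℕ} {lam : ℂ} (hlam : IsPrimitiveRoot lam d)
    {p : ℕ} (hp : p ≠ 0) (y : Fin k → ℂ) :
    jordanBlock k lam ^ p *ᵥ y = y ↔ upperShift ℂ k *ᵥ y = 0 ∧ (y ≠ 0 → d ∣ p) := by
  rw [jordanBlock_eq_smul_one_add_upperShift,
    smul_one_add_pow_mulVec_eq_self_iff lam isNilpotent_upperShift hp, hlam.pow_eq_one_iff_dvd,
    or_iff_not_imp_right]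

section BlockDiagonal

variable {o R : Type*} {m' n' : o → Type*} [Fintype o] [DecidableEq o] [∀ j, Fintype (n' j)]
  [Semiring R]

theorem blockDiagonal'_mulVec_apply (B : ∀ j, Matrix (m' j) (n' j) R) (x : (Σ j, n' j) → R)
    (a : Σ j, m' j) : (blockDiagonal' B *ᵥ x) a = (B a.1 *ᵥ fun i => x ⟨a.1, i⟩) a.2 := by
  obtain ⟨j, i⟩ := a
  simp only [mulVec, dotProduct, ← Finset.univ_sigma_univ, Finset.sum_sigma]
  rw [Finset.sum_eq_single j]
  · simp only [blockDiagonal'_apply_eq]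
  · intro j' _ hj'
    exact Finset.sum_eq_zero fun i' _ => by
      rw [blockDiagonal'_apply_ne B _ _ (Ne.symm hj'), zero_mul]
  · simp

theorem blockDiagonal'_mulVec_eq_self_iff (B : ∀ j, Matrix (n' j) (n' j) R)
    (x : (Σ j, n' j) → R) :
    blockDiagonal' B *ᵥ x = x ↔ ∀ j, B j *ᵥ (fun i => x ⟨j, i⟩) = fun i => x ⟨j, i⟩ := by
  refine ⟨fun h j => funext fun i => ?_, fun h => funext fun a => ?_⟩
  · simpa [blockDiagonal'_mulVec_apply] using congrFun h ⟨j, i⟩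
  · rw [blockDiagonal'_mulVec_apply, h]

end BlockDiagonal

section BlockSupport

variable {o R : Type*} {n' : o → Type*} [Fintype o] [Zero R]

open Classical in
noncomputable def blockSupport (x : (Σ j, n' j) → R) : Finset o :=
  {j | (fun i => x ⟨j, i⟩) ≠ 0}

theorem mem_blockSupport {x : (Σ j, n' j) → R} {j : o} :
    j ∈ blockSupport x ↔ (fun i => x ⟨j, i⟩) ≠ 0 := by
  simp [blockSupport]

theorem blockSupport_nonempty_iff {x : (Σ j, n' j) → R} : (blockSupport x).Nonempty ↔ x ≠ 0 := by
  simp [Finset.Nonempty, mem_blockSupport, Function.ne_iff, Sigma.exists]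

end BlockSupport

theorem blockDiagonal'_jordanBlock_pow_mulVec_eq_self_iff {o : Type*} [Fintype o] [DecidableEq o]
    {k d : o → ℕ} {lam : o → ℂ} (hlam : ∀ j, IsPrimitiveRoot (lam j) (d j)) {p : ℕ} (hp : p ≠ 0)
    (x : (Σ j, Fin (k j)) → ℂ) :
    blockDiagonal' (fun j => jordanBlock (k j) (lam j)) ^ p *ᵥ x = x ↔
      (∀ j, upperShift ℂ (k j) *ᵥ (fun i => x ⟨j, i⟩) = 0) ∧ (blockSupport x).lcm d ∣ p := by
  simp only [← blockDiagonal'_pow, blockDiagonal'_mulVec_eq_self_iff, Pi.pow_apply,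
    jordanBlock_pow_mulVec_eq_self_iff (hlam _) hp, forall_and, Finset.lcm_dvd_iff,
    mem_blockSupport]

theorem exists_upperShift_mulVec_eq_zero_and_blockSupport_eq {o : Type*} [Fintype o]
    {k : o → ℕ} (hk : ∀ j, 1 ≤ k j) (S : Finset o) :
    ∃ x : (Σ j, Fin (k j)) → ℂ,
      (∀ j, upperShift ℂ (k j) *ᵥ (fun i => x ⟨j, i⟩) = 0) ∧ blockSupport x = S := by
  classical
  refine ⟨fun a => if a.1 ∈ S ∧ (a.2 : ℕ) = 0 then 1 else 0,
    fun j => upperShift_mulVec_eq_zero fun i hi => by simp [hi], ?_⟩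
  ext j
  rw [mem_blockSupport, Function.ne_iff]
  by_cases hj : j ∈ S
  · simpa [hj] using ⟨⟨0, hk j⟩, rfl⟩
  · simp [hj]

theorem eq_iff_of_forall_pos_iff_dvd {P : ℕ → Prop} {L q : ℕ} (hP : ∀ p, 0 < p → (P p ↔ L ∣ p))
    (hq : 0 < q) : (P q ∧ ∀ p, 0 < p → p < q → ¬P p) ↔ q = L := by
  constructor
  · rintro ⟨hPq, hmin⟩
    have hLq : L ∣ q := (hP q hq).1 hPq
    have hL : 0 < L := Nat.pos_of_dvd_of_pos hLq hq
    obtain hLq' | hLq' := (Nat.le_of_dvd hq hLq).eq_or_lt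
    · exact hLq'.symm
    · exact absurd ((hP L hL).2 dvd_rfl) (hmin L hL hLq')
  · rintro rfl
    exact ⟨(hP q hq).2 dvd_rfl, fun p hp hpq hPp => (Nat.le_of_dvd hp ((hP p hp).1 hPp)).not_gt hpq⟩

theorem stmt_8_general (m : ℕ) (k : Fin m → ℕ) (hk : ∀ j, 1 ≤ k j)
    (d : Fin m → ℕ)
    (lam : Fin m → ℂ) (hlam : ∀ j, IsPrimitiveRoot (lam j) (d j))
    (Λ : Matrix ((j : Fin m) × Fin (k j)) ((j : Fin m) × Fin (k j)) ℂ)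
    (hΛ : Λ = Matrix.blockDiagonal' (fun j => jordanBlock (k j) (lam j)))
    (q : ℕ) (hq : 1 ≤ q) :
    (∃ x : ((j : Fin m) × Fin (k j)) → ℂ, x ≠ 0 ∧ (Λ ^ q).mulVec x = x ∧
        ∀ p : ℕ, 0 < p → p < q → (Λ ^ p).mulVec x ≠ x) ↔
      (∃ S : Finset (Fin m), S.Nonempty ∧ q = S.lcm d) := by
  subst hΛ
  have hfix (p : ℕ) (hp : 0 < p) :=
    blockDiagonal'_jordanBlock_pow_mulVec_eq_self_iff (k := k) hlam hp.ne'
  constructor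
  · rintro ⟨x, hx0, hper⟩
    have hshift := ((hfix q hq x).1 hper.1).1
    exact ⟨blockSupport x, blockSupport_nonempty_iff.2 hx0,
      (eq_iff_of_forall_pos_iff_dvd (fun p hp => (hfix p hp x).trans (and_iff_right hshift)) hq).1
        hper⟩
  · rintro ⟨S, hS, hqS⟩
    obtain ⟨x, hshift, rfl⟩ := exists_upperShift_mulVec_eq_zero_and_blockSupport_eq hk S
    exact ⟨x, blockSupport_nonempty_iff.1 hS,
      (eq_iff_of_forall_pos_iff_dvd (fun p hp => (hfix p hp x).trans (and_iff_right hshift)) hq).2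
        hqS⟩

/-- Characterization of the set `PE(Λ)` of periods of nonzero periodic points
of a block-diagonal Jordan matrix `Λ` whose `j`-th block is the `k j × k j`
Jordan block with eigenvalue a primitive `d j`-th root of unity: a positive
integer `q` is such a period iff `q` is the lcm of `{d j : j ∈ S}` for some
nonempty set `S` of block indices. -/
theorem stmt_8 (m : ℕ) (hm : 1 ≤ m) (k : Fin m → ℕ) (hk : ∀ j, 1 ≤ k j)
    (d : Fin m → ℕ) (hd : ∀ j, 1 ≤ d j)
    (lam : Fin m → ℂ) (hlam : ∀ j, IsPrimitiveRoot (lam j) (d j))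
    (Λ : Matrix ((j : Fin m) × Fin (k j)) ((j : Fin m) × Fin (k j)) ℂ)
    (hΛ : Λ = Matrix.blockDiagonal' (fun j => jordanBlock (k j) (lam j)))
    (q : ℕ) (hq : 1 ≤ q) :
    (∃ x : ((j : Fin m) × Fin (k j)) → ℂ, x ≠ 0 ∧ (Λ ^ q).mulVec x = x ∧
        ∀ p : ℕ, 0 < p → p < q → (Λ ^ p).mulVec x ≠ x) ↔
      (∃ S : Finset (Fin m), S.Nonempty ∧ q = S.lcm d) :=
  stmt_8_general m k hk d lam hlam Λ hΛ q hq
end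

section
/- Let m ≥ 1, let k_1, …, k_m ≥ 1 be integers with n = k_1 + ⋯ + k_m, and let Λ be the n × n block-diagonal matrix whose j-th block is the k_j × k_j upper-triangular Jordan block with eigenvalue λ_j, where each λ_j ∈ ℂ is a primitive d_j-th root of unity (d_j ≥ 1). Set M(Λ) = lcm(d_1, …, d_m). Then: (a) whenever x ∈ ℂ^n is nonzero and q is the minimal positive integer with Λ^q x = x, q divides M(Λ); and (b) there exists a nonzero x ∈ ℂ^n whose minimal period under x ↦ Λx is exactly M(Λ). -/
/-!
Write `Λ = D + N` with `D` diagonal (entry `λ_j` on block `j`) and `N` nilpotent, commuting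
with `D`. As `λ_j ^ M = 1`, the matrix `A = Λ ^ M` is unipotent. In characteristic zero a
unipotent `A` with `A ^ q x = x`, `q > 0`, already fixes `x`: `A ^ q - 1` is
`(1 + A + ⋯ + A ^ (q - 1)) (A - 1)` and the first factor is `q` plus a nilpotent, hence
invertible. So every periodic point of `Λ` is fixed by `Λ ^ M`, and its minimal period divides
`M`. The vector with a `1` at the first entry of every block is scaled by `λ_j ^ n` on block `j`
under `Λ ^ n`, so its minimal period is `lcm d_j = M`.
-/

open Finset Matrix Function

theorem Commute.isNilpotent_pow_sub_pow {R : Type*} [Ring R] {a b : R} (h : Commute a b)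
    (hab : IsNilpotent (a - b)) (n : ℕ) : IsNilpotent (a ^ n - b ^ n) := by
  rw [← h.mul_geom_sum₂ n]
  refine Commute.isNilpotent_mul_right (Commute.sum_right _ _ _ fun i _ => ?_) hab
  exact (((Commute.self_pow a i).mul_right (h.pow_right _)).sub_left
    ((h.symm.pow_right i).mul_right (Commute.self_pow b _)))

theorem isUnit_geom_sum_of_isNilpotent_sub_one {R : Type*} [Ring R] {a : R}
    (ha : IsNilpotent (a - 1)) {q : ℕ} (hq : IsUnit (q : R)) :
    IsUnit (∑ i ∈ range q, a ^ i) := by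
  have hnil : IsNilpotent (∑ i ∈ range q, (a ^ i - 1)) := by
    refine Commute.isNilpotent_sum (fun i _ => ?_) fun i j _ _ => ?_
    · simpa using (Commute.one_right a).isNilpotent_pow_sub_pow (by simpa using ha) i
    · exact ((Commute.pow_pow_self a i j).sub_left (Commute.one_left _)).sub_right
        (Commute.one_right _)
  have hsum : ∑ i ∈ range q, a ^ i = q + ∑ i ∈ range q, (a ^ i - 1) := by
    simp [sum_sub_distrib]
  rw [hsum]
  exact hnil.isUnit_add_left_of_commute hq (Nat.cast_commute q _).symm

theorem Matrix.mulVec_eq_self_of_pow_mulVec_eq_self {n R : Type*} [Fintype n] [DecidableEq n]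
    [CommRing R] {A : Matrix n n R} (hA : IsNilpotent (A - 1)) {q : ℕ} (hq : IsUnit (q : R))
    {x : n → R} (h : (A ^ q) *ᵥ x = x) : A *ᵥ x = x := by
  have hS : IsUnit (∑ i ∈ range q, A ^ i) :=
    isUnit_geom_sum_of_isNilpotent_sub_one hA <| by
      simpa using hq.map (algebraMap R (Matrix n n R))
  obtain ⟨S', hS'⟩ := hS.exists_left_inv
  have : (A - 1) *ᵥ x = 0 := calc
    (A - 1) *ᵥ x = (S' * (∑ i ∈ range q, A ^ i) * (A - 1)) *ᵥ x := by rw [hS', one_mul]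
    _ = S' *ᵥ ((A ^ q - 1) *ᵥ x) := by rw [mul_assoc, geom_sum_mul, ← mulVec_mulVec]
    _ = 0 := by rw [sub_mulVec, h, one_mulVec, sub_self, mulVec_zero]
  rwa [sub_mulVec, one_mulVec, sub_eq_zero] at this

theorem Matrix.isPeriodicPt_mulVec_iff {n R : Type*} [Fintype n] [DecidableEq n] [Semiring R]
    (A : Matrix n n R) (k : ℕ) (x : n → R) :
    IsPeriodicPt (A *ᵥ ·) k x ↔ A ^ k *ᵥ x = x := by
  suffices (A *ᵥ ·)^[k] x = (A ^ k) *ᵥ x by rw [IsPeriodicPt, IsFixedPt, this]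
  induction k with
  | zero => simp
  | succ k ih => rw [iterate_succ_apply', ih, mulVec_mulVec, pow_succ']

theorem Matrix.isNilpotent_blockDiagonal' {o R : Type*} {m' : o → Type*} [Fintype o]
    [DecidableEq o] [∀ i, Fintype (m' i)] [∀ i, DecidableEq (m' i)] [Semiring R]
    {M : ∀ i, Matrix (m' i) (m' i) R} (h : ∀ i, IsNilpotent (M i)) :
    IsNilpotent (blockDiagonal' M) := by
  choose n hn using h
  refine ⟨∑ i, n i, ?_⟩
  rw [← blockDiagonal'_pow, ← blockDiagonal'_zero]
  congr 1
  funext i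
  exact pow_eq_zero_of_le (single_le_sum (fun _ _ => Nat.zero_le _) (mem_univ i)) (hn i)

theorem Matrix.commute_diagonal_blockDiagonal' {o R : Type*} {m' : o → Type*} [Fintype o]
    [DecidableEq o] [∀ i, Fintype (m' i)] [∀ i, DecidableEq (m' i)] [CommSemiring R]
    (c : o → R) (M : ∀ i, Matrix (m' i) (m' i) R) :
    Commute (diagonal fun p : (i : o) × m' i => c p.1) (blockDiagonal' M) := by
  rw [← blockDiagonal'_diagonal (fun i _ => c i)]
  simp only [Commute, SemiconjBy, ← blockDiagonal'_mul]
  congr 1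
  funext i
  exact scalar_commute (c i) (fun _ => Commute.all _ _) (M i)

theorem jordanBlock_eq_diagonal_add (k : ℕ) (lam : ℂ) :
    jordanBlock k lam = diagonal (fun _ => lam) + jordanBlock k 0 := by
  ext i j
  by_cases hij : (j : ℕ) = i
  · simp [jordanBlock, Fin.ext hij]
  · have hne : i ≠ j := fun h => hij (by rw [h])
    simp [jordanBlock, hij, hne]

theorem isNilpotent_jordanBlock_zero (k : ℕ) : IsNilpotent (jordanBlock k 0) := by
  have htri : (jordanBlock k 0).IsUpperTriangular := fun i j (hji : j < i) => by
    have h1 : (j : ℕ) ≠ i := by omega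
    have h2 : (j : ℕ) ≠ i + 1 := by omega
    simp [jordanBlock, h1, h2]
  have hchar : (jordanBlock k 0).charpoly = Polynomial.X ^ k := by
    simp [charpoly_of_isUpperTriangular _ htri, jordanBlock]
  refine ⟨k, ?_⟩
  simpa [hchar] using aeval_self_charpoly (jordanBlock k 0)

section JordanMatrix

variable {ι : Type*} [DecidableEq ι] (k : ι → ℕ) (lam : ι → ℂ)

abbrev jordanMatrix : Matrix ((j : ι) × Fin (k j)) ((j : ι) × Fin (k j)) ℂ :=
  blockDiagonal' fun j => jordanBlock (k j) (lam j)

def onesAtBlockStarts : (j : ι) × Fin (k j) → ℂ :=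
  fun p => if (p.2 : ℕ) = 0 then 1 else 0

theorem jordanMatrix_eq_diagonal_add :
    jordanMatrix k lam = diagonal (fun p => lam p.1) + jordanMatrix k 0 := by
  simp only [jordanMatrix, jordanBlock_eq_diagonal_add _ (lam _)]
  rw [← blockDiagonal'_diagonal fun j (_ : Fin (k j)) => lam j, ← blockDiagonal'_add]
  rfl

variable [Fintype ι] {k lam}

theorem isNilpotent_jordanMatrix_pow_sub_one {M : ℕ} (hroot : ∀ j, lam j ^ M = 1) :
    IsNilpotent (jordanMatrix k lam ^ M - 1) := by
  have hD : (diagonal fun p : (j : ι) × Fin (k j) => lam p.1) ^ M = 1 := by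
    rw [diagonal_pow, ← diagonal_one]
    exact congrArg diagonal (funext fun p => hroot p.1)
  have hcomm := (Commute.refl (diagonal fun p : (j : ι) × Fin (k j) => lam p.1)).add_left
    (commute_diagonal_blockDiagonal' lam fun j => jordanBlock (k j) 0).symm
  rw [jordanMatrix_eq_diagonal_add, ← hD]
  refine hcomm.isNilpotent_pow_sub_pow ?_ M
  rw [add_sub_cancel_left]
  exact isNilpotent_blockDiagonal' fun j => isNilpotent_jordanBlock_zero (k j)

theorem jordanMatrix_pow_mulVec_eq_self {M q : ℕ} (hroot : ∀ j, lam j ^ M = 1) (hq : 0 < q)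
    {x : (j : ι) × Fin (k j) → ℂ} (h : jordanMatrix k lam ^ q *ᵥ x = x) :
    jordanMatrix k lam ^ M *ᵥ x = x := by
  have hqM : (jordanMatrix k lam ^ M) ^ q *ᵥ x = x := by
    rw [← pow_mul, mul_comm, ← isPeriodicPt_mulVec_iff]
    exact ((isPeriodicPt_mulVec_iff _ _ _).2 h).mul_const M
  exact mulVec_eq_self_of_pow_mulVec_eq_self (isNilpotent_jordanMatrix_pow_sub_one hroot)
    (by simpa using hq.ne') hqM

theorem jordanMatrix_zero_mulVec {v : (j : ι) × Fin (k j) → ℂ}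
    (hv : ∀ p, (p.2 : ℕ) ≠ 0 → v p = 0) : jordanMatrix k 0 *ᵥ v = 0 := by
  funext ⟨j, i⟩
  refine sum_eq_zero fun ⟨j', i'⟩ _ => ?_
  by_cases hi' : (i' : ℕ) = 0
  · obtain rfl | hj := eq_or_ne j j'
    · simp [blockDiagonal'_apply_eq, jordanBlock, hi']
    · simp [blockDiagonal'_apply_ne _ _ _ hj]
  · simp [hv ⟨j', i'⟩ hi']

theorem jordanMatrix_pow_mulVec {v : (j : ι) × Fin (k j) → ℂ}
    (hv : ∀ p, (p.2 : ℕ) ≠ 0 → v p = 0) (n : ℕ) :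
    jordanMatrix k lam ^ n *ᵥ v = fun p => lam p.1 ^ n * v p := by
  induction n with
  | zero => simp
  | succ n ih =>
    rw [pow_succ', ← mulVec_mulVec, ih, jordanMatrix_eq_diagonal_add, add_mulVec,
      jordanMatrix_zero_mulVec fun p hp => by simp [hv p hp], add_zero]
    funext p
    rw [mulVec_diagonal]
    ring

theorem jordanMatrix_pow_mulVec_onesAtBlockStarts_eq_self_iff (hk : ∀ j, 1 ≤ k j) (n : ℕ) :
    jordanMatrix k lam ^ n *ᵥ onesAtBlockStarts k = onesAtBlockStarts k ↔
      ∀ j, lam j ^ n = 1 := by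
  rw [jordanMatrix_pow_mulVec (v := onesAtBlockStarts k) fun p hp => if_neg hp]
  refine ⟨fun h j => ?_, fun h => funext fun p => by simp [h]⟩
  simpa [onesAtBlockStarts] using congrFun h ⟨j, ⟨0, hk j⟩⟩

end JordanMatrix

theorem stmt_9_general (m : ℕ) (hm : 1 ≤ m) (k : Fin m → ℕ) (hk : ∀ j, 1 ≤ k j)
    (d : Fin m → ℕ)
    (lam : Fin m → ℂ) (hlam : ∀ j, IsPrimitiveRoot (lam j) (d j))
    (Λ : Matrix ((j : Fin m) × Fin (k j)) ((j : Fin m) × Fin (k j)) ℂ)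
    (hΛ : Λ = Matrix.blockDiagonal' (fun j => jordanBlock (k j) (lam j)))
    (M : ℕ) (hM : M = Finset.univ.lcm d) :
    (∀ x : ((j : Fin m) × Fin (k j)) → ℂ, x ≠ 0 → ∀ q : ℕ, 0 < q →
        (Λ ^ q).mulVec x = x → (∀ p : ℕ, 0 < p → (Λ ^ p).mulVec x = x → q ≤ p) →
        q ∣ M) ∧
      (∃ x : ((j : Fin m) × Fin (k j)) → ℂ, x ≠ 0 ∧ (Λ ^ M).mulVec x = x ∧
        ∀ p : ℕ, 0 < p → p < M → (Λ ^ p).mulVec x ≠ x) := by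
  subst hΛ hM
  have hroot : ∀ j, lam j ^ univ.lcm d = 1 := fun j =>
    ((hlam j).pow_eq_one_iff_dvd _).2 (dvd_lcm (mem_univ j))
  have hstarts := jordanMatrix_pow_mulVec_onesAtBlockStarts_eq_self_iff (lam := lam) hk
  constructor
  · intro x _ q hq hfix hmin
    have hfixM := jordanMatrix_pow_mulVec_eq_self hroot hq hfix
    have hgcd := ((isPeriodicPt_mulVec_iff _ _ _).2 hfix).gcd
      ((isPeriodicPt_mulVec_iff _ _ _).2 hfixM)
    have hle : q ≤ q.gcd (univ.lcm d) :=
      hmin _ (Nat.gcd_pos_of_pos_left _ hq) ((isPeriodicPt_mulVec_iff _ _ _).1 hgcd)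
    rw [le_antisymm hle (Nat.gcd_le_left _ hq)]
    exact Nat.gcd_dvd_right _ _
  · refine ⟨onesAtBlockStarts k, fun h => ?_, (hstarts _).2 hroot, fun p hp hpM hfix => ?_⟩
    · simpa [onesAtBlockStarts] using congrFun h ⟨⟨0, hm⟩, ⟨0, hk _⟩⟩
    · have hdvd : univ.lcm d ∣ p :=
        Finset.lcm_dvd fun j _ => (hlam j).dvd_of_pow_eq_one _ ((hstarts p).1 hfix j)
      exact absurd (Nat.le_of_dvd hp hdvd) (not_le.2 hpM)

/-- For a block-diagonal Jordan matrix `Λ` with eigenvalues primitive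
`d j`-th roots of unity and `M(Λ) = lcm (d 1, …, d m)`:
(a) the minimal period of any nonzero periodic point of `x ↦ Λ x` divides
`M(Λ)`, and (b) some nonzero vector has minimal period exactly `M(Λ)`. -/
theorem stmt_9 (m : ℕ) (hm : 1 ≤ m) (k : Fin m → ℕ) (hk : ∀ j, 1 ≤ k j)
    (d : Fin m → ℕ) (hd : ∀ j, 1 ≤ d j)
    (lam : Fin m → ℂ) (hlam : ∀ j, IsPrimitiveRoot (lam j) (d j))
    (Λ : Matrix ((j : Fin m) × Fin (k j)) ((j : Fin m) × Fin (k j)) ℂ)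
    (hΛ : Λ = Matrix.blockDiagonal' (fun j => jordanBlock (k j) (lam j)))
    (M : ℕ) (hM : M = Finset.univ.lcm d) :
    (∀ x : ((j : Fin m) × Fin (k j)) → ℂ, x ≠ 0 → ∀ q : ℕ, 0 < q →
        (Λ ^ q).mulVec x = x → (∀ p : ℕ, 0 < p → (Λ ^ p).mulVec x = x → q ≤ p) →
        q ∣ M) ∧
      (∃ x : ((j : Fin m) × Fin (k j)) → ℂ, x ≠ 0 ∧ (Λ ^ M).mulVec x = x ∧
        ∀ p : ℕ, 0 < p → p < M → (Λ ^ p).mulVec x ≠ x) :=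
  stmt_9_general m hm k hk d lam hlam Λ hΛ M hM
end

section
/- Let f : ℂ → ℂ be analytic at 0 with f(0) = 0, let λ = f'(0), and let q ≥ 1 be an integer such that λ = 1 or λ^q ≠ 1. Assume that the function z ↦ f(z) − z does not vanish identically on any neighborhood of 0. Then the function z ↦ f^{∘q}(z) − z (where f^{∘q} denotes the q-th iterate of f) also does not vanish identically on any neighborhood of 0, and its order of vanishing at 0 equals the order of vanishing at 0 of z ↦ f(z) − z. -/
/-!
Write `f z - z = (z - a) ^ n • h z` near the fixed point `a` with `h a ≠ 0`, and `λ = f'(a)`.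
Since `f z - a = (z - a) • dslope f a z` and `dslope f a a = λ`, splitting
`f^[k+1] z - z = (f^[k] (f z) - f z) + (f z - z)` shows inductively that
`f^[k] z - z = (z - a) ^ n • u_k z` with `u_k a = (1 + λ^n + ⋯ + λ^(n(k-1))) h a`.
If `λ = 1` this coefficient is `k • h a`; otherwise `f - id` has a simple zero, so `n = 1` and
the coefficient is `(λ^k - 1) / (λ - 1) • h a`. Either way it is nonzero.
-/

open Filter Finset Topology

theorem geom_sum_ne_zero_of_eq_one_or_pow_ne_one {K : Type*} [Field K] [CharZero K] {x : K}
    {q : ℕ} (hq : q ≠ 0) (hx : x = 1 ∨ x ^ q ≠ 1) : ∑ i ∈ range q, x ^ i ≠ 0 := by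
  rcases hx with rfl | hx
  · simpa using hq
  · have hx1 : x ≠ 1 := by rintro rfl; simp at hx
    rw [geom_sum_eq hx1]
    exact div_ne_zero (sub_ne_zero.mpr hx) (sub_ne_zero.mpr hx1)

section

variable {𝕜 : Type*} [NontriviallyNormedField 𝕜]

theorem AnalyticAt.iterate {E : Type*} [NormedAddCommGroup E] [NormedSpace 𝕜 E] {f : E → E}
    {a : E} (hf : AnalyticAt 𝕜 f a) (ha : f a = a) (k : ℕ) : AnalyticAt 𝕜 f^[k] a := by
  induction k with
  | zero => exact analyticAt_id
  | succ k ih =>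
    rw [Function.iterate_succ]
    exact ih.comp_of_eq hf ha

theorem AnalyticAt.dslope {E : Type*} [NormedAddCommGroup E] [NormedSpace 𝕜 E] {f : 𝕜 → E}
    {a : 𝕜} (hf : AnalyticAt 𝕜 f a) : AnalyticAt 𝕜 (dslope f a) a :=
  let ⟨_, hp⟩ := hf
  hp.has_fpower_series_dslope_fslope.analyticAt

theorem exists_iterate_sub_eq_pow_smul {f h : 𝕜 → 𝕜} {a : 𝕜} {n : ℕ}
    (hf : AnalyticAt 𝕜 f a) (ha : f a = a) (hh : AnalyticAt 𝕜 h a)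
    (hfh : ∀ᶠ z in 𝓝 a, f z - z = (z - a) ^ n • h z) (k : ℕ) :
    ∃ u : 𝕜 → 𝕜, AnalyticAt 𝕜 u a ∧ u a = (∑ i ∈ range k, (deriv f a ^ n) ^ i) * h a ∧
      ∀ᶠ z in 𝓝 a, f^[k] z - z = (z - a) ^ n • u z := by
  induction k with
  | zero => exact ⟨0, analyticAt_const, by simp, by simp⟩
  | succ k ih =>
    obtain ⟨u, hu, hua, hfu⟩ := ih
    have hfa : Tendsto f (𝓝 a) (𝓝 a) := by simpa only [ha] using hf.continuousAt.tendsto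
    refine ⟨fun z ↦ dslope f a z ^ n * u (f z) + h z, ?_, ?_, ?_⟩
    · exact ((hf.dslope.pow n).mul (hu.comp_of_eq hf ha)).add hh
    · simp only [ha, hua, dslope_same, geom_sum_succ]
      ring
    · filter_upwards [hfh, hfa.eventually hfu] with z hz hfz
      have hslope : f z - a = (z - a) * dslope f a z := by
        simpa [ha] using (sub_smul_dslope f a z).symm
      simp only [smul_eq_mul] at hz hfz ⊢
      calc f^[k + 1] z - z = (f^[k] (f z) - f z) + (f z - z) := by
            rw [Function.iterate_succ_apply]; ring
        _ = (z - a) ^ n * (dslope f a z ^ n * u (f z) + h z) := by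
            rw [hfz, hz, hslope, mul_pow]; ring

theorem AnalyticAt.analyticOrderAt_iterate_sub_self [CharZero 𝕜] {f : 𝕜 → 𝕜} {a : 𝕜}
    (hf : AnalyticAt 𝕜 f a) (ha : f a = a) {q : ℕ} (hq : q ≠ 0)
    (hev : deriv f a = 1 ∨ deriv f a ^ q ≠ 1)
    (hfin : analyticOrderAt (fun z ↦ f z - z) a ≠ ⊤) :
    analyticOrderAt (fun z ↦ f^[q] z - z) a = analyticOrderAt (fun z ↦ f z - z) a := by
  have hg : AnalyticAt 𝕜 (fun z ↦ f z - z) a := hf.fun_sub analyticAt_id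
  have hgq : AnalyticAt 𝕜 (fun z ↦ f^[q] z - z) a := (hf.iterate ha q).fun_sub analyticAt_id
  obtain ⟨n, hn⟩ := ENat.ne_top_iff_exists.mp hfin
  obtain ⟨h, hh, hha, hfh⟩ := hg.analyticOrderAt_eq_natCast.mp hn.symm
  obtain ⟨u, hu, hua, hfu⟩ := exists_iterate_sub_eq_pow_smul hf ha hh hfh q
  have hev_pow : deriv f a ^ n = 1 ∨ (deriv f a ^ n) ^ q ≠ 1 := by
    rcases hev with h1 | h1
    · simp [h1]
    · by_cases hlam : deriv f a = 1
      · simp [hlam]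
      have hderiv : deriv (fun z ↦ f z - z) a ≠ 0 := by
        rw [deriv_fun_sub hf.differentiableAt differentiableAt_fun_id, deriv_id'', sub_ne_zero]
        exact hlam
      have hn1 : n = 1 := by
        have := hg.analyticOrderAt_eq_one_of_zero_deriv_ne_zero (by simp [ha]) hderiv
        exact_mod_cast hn.trans this
      exact .inr (by simpa [hn1] using h1)
  have hua_ne : u a ≠ 0 := hua ▸ mul_ne_zero (geom_sum_ne_zero_of_eq_one_or_pow_ne_one hq hev_pow) hha
  rw [← hn, hgq.analyticOrderAt_eq_natCast]
  exact ⟨u, hu, hua_ne, hfu⟩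

end

theorem stmt_10_general (f : ℂ → ℂ) (hf : AnalyticAt ℂ f 0) (h0 : f 0 = 0)
    (q : ℕ) (hq : 1 ≤ q) (hev : deriv f 0 = 1 ∨ (deriv f 0) ^ q ≠ 1)
    (hnv : ¬ (fun z => f z - z) =ᶠ[nhds (0 : ℂ)] 0) :
    ∃ hgq : AnalyticAt ℂ (fun z => f^[q] z - z) 0,
      (¬ (fun z => f^[q] z - z) =ᶠ[nhds (0 : ℂ)] 0) ∧ analyticOrderAt (fun z => f^[q] z - z) 0 = analyticOrderAt (fun z => f z - z) 0 := by
  have hfin : analyticOrderAt (fun z ↦ f z - z) 0 ≠ ⊤ := fun h ↦ hnv (analyticOrderAt_eq_top.mp h)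
  have horder := hf.analyticOrderAt_iterate_sub_self h0 (by omega) hev hfin
  refine ⟨(hf.iterate h0 q).fun_sub analyticAt_id, fun h ↦ hfin ?_, horder⟩
  rw [← horder]
  exact analyticOrderAt_eq_top.mpr h

/-- One-dimensional Shub–Sullivan lemma: if `f` is analytic at `0`, `f 0 = 0`,
`λ = f'(0)` satisfies `λ = 1` or `λ^q ≠ 1`, and `z ↦ f z - z` does not vanish
identically near `0`, then `z ↦ f^[q] z - z` does not vanish identically near
`0` and its order of vanishing at `0` equals that of `z ↦ f z - z`. -/
theorem stmt_10 (f : ℂ → ℂ) (hf : AnalyticAt ℂ f 0) (h0 : f 0 = 0)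
    (q : ℕ) (hq : 1 ≤ q) (hev : deriv f 0 = 1 ∨ (deriv f 0) ^ q ≠ 1)
    (hg : AnalyticAt ℂ (fun z => f z - z) 0)
    (hnv : ¬ (fun z => f z - z) =ᶠ[nhds (0 : ℂ)] 0) :
    ∃ hgq : AnalyticAt ℂ (fun z => f^[q] z - z) 0,
      (¬ (fun z => f^[q] z - z) =ᶠ[nhds (0 : ℂ)] 0) ∧ analyticOrderAt (fun z => f^[q] z - z) 0 = analyticOrderAt (fun z => f z - z) 0 :=
  stmt_10_general f hf h0 q hq hev hnv
end

section
/- Let n ≥ 1 and q ≥ 2 be integers, let U ⊆ ℂ^n be open with 0 ∈ U, and let f : ℂ^n → ℂ^n be holomorphic on U with f(0) = 0 and derivative Λ = Df(0) at 0. Assume there exists r₀ > 0 with B̄(0, r₀) ⊆ U such that every x ∈ B̄(0, r₀) has its first q iterates under f defined and 0 is the unique fixed point of f and of f^{∘q} in B̄(0, r₀). Assume further that the linear map x ↦ Λx has NO periodic point of minimal period q, i.e. there is no v ≠ 0 with Λ^q v = v and Λ^p v ≠ v for all 0 < p < q. Then there exist r > 0 with B̄(0, r) ⊆ U and ε > 0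 such that for every map g : ℂ^n → ℂ^n holomorphic on U with sup_{z ∈ B(0,r)} ‖g(z) − f(z)‖ < ε, there is no point x ∈ B(0, r) with g^{∘j}(x) ∈ B(0, r) for all 0 ≤ j < q, g^{∘q}(x) = x and g^{∘p}(x) ≠ x for all 0 < p < q. -/
/-!
Suppose `x` has minimal period `q` under a small perturbation `g` of `f` and its orbit stays in a
small ball. As `0` is the only fixed point of `f^[q]` nearby, `‖f^[q] y - y‖` is bounded below on
an annulus, so the orbit lies in a three times smaller ball. There `g - Λ` has a small Lipschitz
constant by the Cauchy estimates: on a ball of radius `r` it is bounded by `ε + η r` with `η`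
small, as `Λ = Df(0)`.

A complex vector space is not a finite union of proper subspaces, so the absence of points of
minimal period `q` for `Λ` yields one proper divisor `d` of `q` with
`ker (Λ^q - 1) ⊆ ker (Λ^d - 1)`. The differences `w i = x_{i+d} - x_i` then form an approximate
`Λ`-cycle (`w (i+1) - Λ (w i)` is small compared with `w`) whose sum over `0, d, 2d, …`
telescopes to `0`. The only exact such cycle is `0`, so by finite dimensionality `w` is bounded by
a constant times its cycle defect; this forces `w = 0`, that is `g^[d] x = x`.
-/

open Metric Set Function

section LinearAlgebra

variable {K V : Type*} [Field K] [AddCommGroup V] [Module K V]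

namespace Module.End

theorem exists_mem_properDivisors_forall_isPeriodicPt [Infinite K] (Λ : Module.End K V)
    {q : ℕ} (hq : 1 < q) (h : ∀ v ≠ 0, minimalPeriod Λ v ≠ q) :
    ∃ d ∈ q.properDivisors, ∀ v, IsPeriodicPt Λ q v → IsPeriodicPt Λ d v := by
  have mem_eqLocus (d : ℕ) (v : V) : v ∈ LinearMap.eqLocus (Λ ^ d) 1 ↔ IsPeriodicPt Λ d v := by
    simp [IsPeriodicPt, IsFixedPt, pow_apply]
  let W := LinearMap.eqLocus (Λ ^ q) 1
  let P (d : q.properDivisors) : Subspace K W :=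
    (LinearMap.eqLocus (Λ ^ (d : ℕ)) 1).comap W.subtype
  have hcover : ⋃ d, (P d : Set W) = univ := by
    refine eq_univ_of_forall fun ⟨v, hv⟩ ↦ mem_iUnion.2 ?_
    have hv : IsPeriodicPt Λ q v := (mem_eqLocus q v).1 hv
    have hmin : minimalPeriod Λ v ∈ q.properDivisors := by
      refine Nat.mem_properDivisors.2 ⟨hv.minimalPeriod_dvd,
        (hv.minimalPeriod_le (by omega)).lt_of_ne fun heq ↦ ?_⟩
      rcases eq_or_ne v 0 with rfl | hv0
      · rw [minimalPeriod_eq_one_iff_isFixedPt.2 (map_zero Λ)] at heq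
        omega
      · exact h v hv0 heq
    exact ⟨⟨_, hmin⟩, (mem_eqLocus _ v).2 (isPeriodicPt_minimalPeriod Λ v)⟩
  obtain ⟨⟨d, hd⟩, hP⟩ := Subspace.exists_eq_top_of_iUnion_eq_univ hcover
  refine ⟨d, hd, fun v hv ↦ ?_⟩
  have : (⟨v, (mem_eqLocus q v).2 hv⟩ : W) ∈ P ⟨d, hd⟩ := hP ▸ Submodule.mem_top
  exact (mem_eqLocus d v).1 this

def cycleDefect (Λ : Module.End K V) (q : ℕ) : (ZMod q → V) →ₗ[K] ZMod q → V :=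
  LinearMap.pi fun i ↦ LinearMap.proj (i + 1) - Λ ∘ₗ LinearMap.proj (φ := fun _ ↦ V) i

@[simp]
theorem cycleDefect_apply (Λ : Module.End K V) (q : ℕ) (w : ZMod q → V) (i : ZMod q) :
    Λ.cycleDefect q w i = w (i + 1) - Λ (w i) :=
  rfl

end Module.End

variable (K V) in
/-- On the differences `w i = x (i + d) - x i` of a `q`-periodic sequence `x` this sum telescopes
to `0`, while on an exact `Λ`-cycle fixed by `Λ ^ d` it equals `(q / d) • w 0`. -/
def strideSum (q d : ℕ) : (ZMod q → V) →ₗ[K] V :=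
  ∑ j ∈ Finset.range (q / d), LinearMap.proj ((j * d : ℕ) : ZMod q)

@[simp]
theorem strideSum_apply (q d : ℕ) (w : ZMod q → V) :
    strideSum K V q d w = ∑ j ∈ Finset.range (q / d), w ((j * d : ℕ) : ZMod q) := by
  simp [strideSum]

theorem Module.End.ker_cycleDefect_inf_ker_strideSum [CharZero K] (Λ : Module.End K V)
    {q d : ℕ} [NeZero q] (hd : d ∣ q) (hfix : ∀ v, IsPeriodicPt Λ q v → IsPeriodicPt Λ d v) :
    LinearMap.ker (Λ.cycleDefect q) ⊓ LinearMap.ker (strideSum K V q d) = ⊥ := by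
  refine eq_bot_iff.2 fun w ⟨hC, hT⟩ ↦ ?_
  rw [SetLike.mem_coe, LinearMap.mem_ker] at hC hT
  have hw (k : ℕ) : w k = Λ^[k] (w 0) := by
    induction k with
    | zero => simp
    | succ k ih =>
      rw [iterate_succ_apply', ← ih, Nat.cast_succ, ← sub_eq_zero]
      exact congrFun hC k
  have hper : IsPeriodicPt Λ d (w 0) := hfix _ <| by
    simpa [IsPeriodicPt, IsFixedPt, ZMod.natCast_self] using (hw q).symm
  have hm : q / d ≠ 0 := (Nat.div_pos (Nat.le_of_dvd (NeZero.pos q) hd)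
    (Nat.pos_of_dvd_of_pos hd (NeZero.pos q))).ne'
  have h0 : w 0 = 0 := by
    have : ((q / d : ℕ) : K) • w 0 = 0 := by
      simp only [strideSum_apply, hw, (hper.const_mul _).eq] at hT
      simpa [Nat.cast_smul_eq_nsmul] using hT
    exact (smul_eq_zero.1 this).resolve_left (Nat.cast_ne_zero.2 hm)
  ext i
  rw [← ZMod.natCast_zmod_val i, hw, h0, iterate_map_zero]
  rfl

end LinearAlgebra

theorem LinearMap.exists_norm_le_mul_norm_of_ker_inf_ker_eq_bot {𝕜 V W Z : Type*}
    [NontriviallyNormedField 𝕜] [CompleteSpace 𝕜] [NormedAddCommGroup V] [NormedSpace 𝕜 V]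
    [FiniteDimensional 𝕜 V] [NormedAddCommGroup W] [NormedSpace 𝕜 W] [AddCommGroup Z]
    [Module 𝕜 Z] (C : V →ₗ[𝕜] W) (T : V →ₗ[𝕜] Z) (h : ker C ⊓ ker T = ⊥) :
    ∃ c > 0, ∀ v ∈ ker T, ‖v‖ ≤ c * ‖C v‖ := by
  have hker : ker (C.domRestrict (ker T)) = ⊥ :=
    ker_eq_bot'.2 fun v hv ↦ Subtype.ext <| (Submodule.eq_bot_iff _).1 h v ⟨hv, v.2⟩
  obtain ⟨c, hc, hC⟩ := (C.domRestrict (ker T)).exists_antilipschitzWith hker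
  exact ⟨c, hc, fun v hv ↦ by simpa using hC.le_mul_dist ⟨v, hv⟩ 0⟩

theorem Function.IsPeriodicPt.isPeriodicPt_of_cycleDefect_bound {𝕜 V : Type*} [NormedField 𝕜]
    [NormedAddCommGroup V] [NormedSpace 𝕜 V] (Λ : Module.End 𝕜 V) {g : V → V} {S : Set V}
    {x : V} {q d : ℕ} [NeZero q] {c L : ℝ} (hc : 0 ≤ c) (hL : 0 ≤ L)
    (hcycle : ∀ w ∈ LinearMap.ker (strideSum 𝕜 V q d), ‖w‖ ≤ c * ‖Λ.cycleDefect q w‖)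
    (hx : IsPeriodicPt g q x) (hd : d ∣ q) (hS : ∀ k, g^[k] x ∈ S)
    (hlip : ∀ a ∈ S, ∀ b ∈ S, dist (g a - Λ a) (g b - Λ b) ≤ L * dist a b) (hcL : c * L < 1) :
    IsPeriodicPt g d x := by
  set s : ℕ → V := fun k ↦ g^[k] x
  have hs : Periodic s q := hx.periodic_iterate
  set u : ℕ → V := fun k ↦ s (k + d) - s k
  have hu : Periodic u q := fun k ↦ by simp only [u, add_right_comm k q d, hs _]
  set w : ZMod q → V := fun i ↦ u i.val
  have hw (k : ℕ) : w k = u k := by simp only [w, ZMod.val_natCast, hu.map_mod_nat]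
  have hT : w ∈ LinearMap.ker (strideSum 𝕜 V q d) := by
    rw [LinearMap.mem_ker, strideSum_apply]
    simp only [hw, u, ← add_one_mul, Finset.sum_range_sub (fun j ↦ s (j * d)),
      Nat.div_mul_cancel hd, zero_mul, hs.eq, sub_self]
  have hC : ‖Λ.cycleDefect q w‖ ≤ L * ‖w‖ := by
    refine (pi_norm_le_iff_of_nonempty _).2 fun i ↦ ?_
    rw [← ZMod.natCast_zmod_val i, Module.End.cycleDefect_apply, ← Nat.cast_succ, hw, hw]
    have : u (i.val + 1) - Λ (u i.val) =
        (g (s (i.val + d)) - Λ (s (i.val + d))) - (g (s i.val) - Λ (s i.val)) := by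
      simp only [u, s, add_right_comm _ 1 d, iterate_succ_apply', map_sub]
      abel
    rw [this, ← dist_eq_norm]
    refine (hlip _ (hS _) _ (hS _)).trans (mul_le_mul_of_nonneg_left ?_ hL)
    simpa [dist_eq_norm, hw] using norm_le_pi_norm w (i.val : ZMod q)
  have hw0 : w = 0 := by
    have := (hcycle w hT).trans (mul_le_mul_of_nonneg_left hC hc)
    exact norm_eq_zero.1 (le_antisymm (by nlinarith [norm_nonneg w]) (norm_nonneg w))
  have := congrFun hw0 0
  rw [← Nat.cast_zero, hw] at this
  exact sub_eq_zero.1 (by simpa [u, s] using this)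

theorem ContinuousOn.iterate_of_forall_iterate_mem {X : Type*} [TopologicalSpace X] {f : X → X}
    {U s : Set X} {k : ℕ} (hf : ContinuousOn f U) (hs : ∀ x ∈ s, ∀ j < k, f^[j] x ∈ U) :
    ContinuousOn f^[k] s := by
  induction k with
  | zero => exact continuousOn_id
  | succ k ih =>
    rw [iterate_succ']
    exact hf.comp (ih fun x hx j hj ↦ hs x hx j (by omega)) fun x hx ↦ hs x hx k k.lt_succ_self

theorem Function.IsPeriodicPt.iterate_mem {α : Type*} {g : α → α} {x : α} {q : ℕ} {t : Set α}
    (hx : IsPeriodicPt g q x) (hq : 0 < q) (ht : ∀ j < q, g^[j] x ∈ t) (k : ℕ) : g^[k] x ∈ t :=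
  hx.iterate_mod_apply k ▸ ht _ (Nat.mod_lt k hq)

theorem dist_iterate_le_of_dist_le {X : Type*} [PseudoMetricSpace X] {f g : X → X}
    {s t : Set X} {L ε : ℝ} {k : ℕ} (hL : 0 ≤ L) (hε : 0 ≤ ε)
    (hf : ∀ a ∈ s, ∀ b ∈ s, dist (f a) (f b) ≤ L * dist a b)
    (hts : cthickening ((L + 1) ^ k * ε) t ⊆ s) (hfg : ∀ z ∈ t, dist (g z) (f z) ≤ ε)
    {y : X} (hy : ∀ j < k, g^[j] y ∈ t) :
    dist (g^[k] y) (f^[k] y) ≤ (L + 1) ^ k * ε := by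
  suffices ∀ j ≤ k, dist (g^[j] y) (f^[j] y) ≤ (L + 1) ^ j * ε from this k le_rfl
  intro j hj
  induction j with
  | zero => simpa using hε
  | succ j ih =>
    have ih := ih (by omega)
    have hgt : g^[j] y ∈ t := hy j (by omega)
    have hpow : (L + 1) ^ j * ε ≤ (L + 1) ^ k * ε :=
      mul_le_mul_of_nonneg_right (pow_le_pow_right₀ (by linarith) (by omega)) hε
    have hfs : f^[j] y ∈ s := hts <| mem_cthickening_of_dist_le _ _ _ _ hgt <| by
      rw [dist_comm]; exact ih.trans hpow
    have hgs : g^[j] y ∈ s := hts <| self_subset_cthickening t hgt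
    have h1 : 1 ≤ (L + 1) ^ j := one_le_pow₀ (by linarith)
    rw [iterate_succ_apply', iterate_succ_apply', pow_succ]
    calc dist (g (g^[j] y)) (f (f^[j] y))
        ≤ dist (g (g^[j] y)) (f (g^[j] y)) + dist (f (g^[j] y)) (f (f^[j] y)) := dist_triangle ..
      _ ≤ ε + L * ((L + 1) ^ j * ε) :=
          add_le_add (hfg _ hgt) ((hf _ hgs _ hfs).trans (mul_le_mul_of_nonneg_left ih hL))
      _ ≤ (L + 1) ^ j * (L + 1) * ε := by nlinarith

theorem exists_forall_iterate_mem_ball_of_isPeriodicPt {X : Type*} [MetricSpace X]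
    [ProperSpace X] {f : X → X} {c : X} {ρ r L : ℝ} {q : ℕ} (hq : 0 < q) (hr : 0 < r)
    (hL : 0 ≤ L) (hf : ∀ a ∈ ball c (2 * r), ∀ b ∈ ball c (2 * r), dist (f a) (f b) ≤ L * dist a b)
    (hcont : ContinuousOn f^[q] (closedBall c r))
    (hfix : ∀ y ∈ closedBall c r, IsPeriodicPt f q y → y ∈ ball c ρ) :
    ∃ ε > 0, ∀ g : X → X, (∀ z ∈ ball c r, dist (g z) (f z) ≤ ε) →
      ∀ y, (∀ j < q, g^[j] y ∈ ball c r) → IsPeriodicPt g q y → ∀ k, g^[k] y ∈ ball c ρ := by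
  set A := closedBall c r ∩ {y | ρ ≤ dist y c}
  have hA : IsCompact A := (isCompact_closedBall c r).inter_right
    (isClosed_le continuous_const (continuous_id.dist continuous_const))
  obtain ⟨δ, hδ, hδA⟩ := hA.exists_forall_le' (f := fun y ↦ dist (f^[q] y) y) (a := 0)
    (continuous_dist.comp_continuousOn ((hcont.mono inter_subset_left).prodMk continuousOn_id))
    fun y hy ↦ dist_pos.2 fun h ↦ (mem_ball.1 (hfix y hy.1 h)).not_ge hy.2
  obtain ⟨ε, hε, hεδ⟩ := exists_pos_mul_lt (lt_min hδ hr) ((L + 1) ^ q)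
  have hts : cthickening ((L + 1) ^ q * ε) (ball c r) ⊆ ball c (2 * r) := by
    rw [two_mul]
    exact (cthickening_subset_thickening' hr (hεδ.trans_le (min_le_right _ _)) _).trans
      (thickening_ball c r r)
  have hconf : ∀ g : X → X, (∀ z ∈ ball c r, dist (g z) (f z) ≤ ε) →
      ∀ y, (∀ j < q, g^[j] y ∈ ball c r) → IsPeriodicPt g q y → y ∈ ball c ρ := by
    refine fun g hfg y hy hyq ↦ mem_ball.2 (not_le.1 fun hρ ↦ ?_)
    have hclose := dist_iterate_le_of_dist_le hL hε.le hf hts hfg hy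
    rw [hyq.eq] at hclose
    have hyA : y ∈ A := ⟨ball_subset_closedBall (by simpa using hy 0 hq), hρ⟩
    linarith [hδA y hyA, min_le_left δ r, dist_comm y (f^[q] y)]
  refine ⟨ε, hε, fun g hfg y hy hyq k ↦ hconf g hfg _ (fun j _ ↦ ?_) (hyq.apply_iterate k)⟩
  rw [← iterate_add_apply]
  exact hyq.iterate_mem hq hy _

section Holomorphic

variable {E F : Type*} [NormedAddCommGroup E] [NormedSpace ℂ E] [NormedAddCommGroup F]
  [NormedSpace ℂ F]

theorem Complex.dist_le_div_mul_dist_of_forall_norm_le {u : E → F} {c x y : E} {R B : ℝ}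
    (hd : DifferentiableOn ℂ u (ball c (3 * R))) (hB : ∀ z ∈ ball c (3 * R), ‖u z‖ ≤ B)
    (hx : x ∈ ball c R) (hy : y ∈ ball c R) :
    dist (u y) (u x) ≤ B / R * dist y x := by
  have hsub : ball x (2 * R) ⊆ ball c (3 * R) :=
    ball_subset_ball' (by linarith [mem_ball.1 hx])
  have hxc : x ∈ ball c (3 * R) := hsub (mem_ball_self (by linarith [dist_nonneg.trans_lt hx]))
  have hmaps : MapsTo u (ball x (2 * R)) (closedBall (u x) (2 * B)) := fun z hz ↦ by
    rw [mem_closedBall]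
    linarith [dist_le_norm_add_norm (u z) (u x), hB z (hsub hz), hB x hxc]
  have hyx : y ∈ ball x (2 * R) := by
    rw [mem_ball]
    linarith [dist_triangle_right y x c, mem_ball.1 hx, mem_ball.1 hy]
  simpa [mul_div_mul_left B R two_ne_zero] using
    Complex.dist_le_div_mul_dist_of_mapsTo_ball (hd.mono hsub) hmaps hyx

theorem Complex.dist_sub_sub_le_mul_dist {f g : E → F} {Λ : E →L[ℂ] F} {r η ε : ℝ} (hr : 0 < r)
    (hη : 0 ≤ η) (hg : DifferentiableOn ℂ g (ball 0 (3 * r)))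
    (hfΛ : ∀ z ∈ ball (0 : E) (3 * r), ‖f z - Λ z‖ ≤ η * ‖z‖)
    (hgf : ∀ z ∈ ball 0 (3 * r), dist (g z) (f z) ≤ ε) {a b : E} (ha : a ∈ ball 0 r)
    (hb : b ∈ ball 0 r) :
    dist (g a - Λ a) (g b - Λ b) ≤ (ε / r + 3 * η) * dist a b := by
  have hbound : ∀ z ∈ ball (0 : E) (3 * r), ‖g z - Λ z‖ ≤ ε + η * (3 * r) := fun z hz ↦ by
    calc ‖g z - Λ z‖ ≤ dist (g z) (f z) + ‖f z - Λ z‖ := by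
          rw [dist_eq_norm]; exact norm_sub_le_norm_sub_add_norm_sub _ _ _
      _ ≤ ε + η * (3 * r) := add_le_add (hgf z hz)
          ((hfΛ z hz).trans (mul_le_mul_of_nonneg_left (mem_ball_zero_iff.1 hz).le hη))
  have := Complex.dist_le_div_mul_dist_of_forall_norm_le (u := fun z ↦ g z - Λ z)
    (hg.sub Λ.differentiable.differentiableOn) hbound hb ha
  rwa [show (ε + η * (3 * r)) / r = ε / r + 3 * η by field_simp] at this

end Holomorphic

theorem exists_forall_isPeriodicPt_of_dist_le {E : Type*} [NormedAddCommGroup E]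
    [NormedSpace ℂ E] [FiniteDimensional ℂ E] {f : E → E} {Λ : E →L[ℂ] E} {r₀ c : ℝ} {q d : ℕ}
    [NeZero q] (hr₀ : 0 < r₀) (hc : 0 < c) (hf : DifferentiableOn ℂ f (closedBall 0 r₀))
    (hf0 : f 0 = 0) (hΛ : HasFDerivAt f Λ 0) (hcont : ContinuousOn f^[q] (closedBall 0 r₀))
    (hfix : ∀ x ∈ closedBall 0 r₀, IsPeriodicPt f q x → x = 0)
    (hcycle : ∀ w ∈ LinearMap.ker (strideSum ℂ E q d),
      ‖w‖ ≤ c * ‖Module.End.cycleDefect (Λ : E →ₗ[ℂ] E) q w‖)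
    (hd : d ∣ q) :
    ∃ r > 0, r ≤ r₀ ∧ ∃ ε > 0, ∀ g : E → E, DifferentiableOn ℂ g (ball 0 r) →
      (∀ z ∈ ball 0 r, dist (g z) (f z) ≤ ε) →
      ∀ x, (∀ j < q, g^[j] x ∈ ball 0 r) → IsPeriodicPt g q x → IsPeriodicPt g d x := by
  obtain ⟨σ, hσ, hfΛ⟩ :=
    Metric.eventually_nhds_iff_ball.1 (hΛ.isLittleO.def (by positivity : 0 < (12 * c)⁻¹))
  obtain ⟨M, hM⟩ := (isCompact_closedBall (0 : E) r₀).exists_bound_of_continuousOn hf.continuousOn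
  have hM0 : 0 ≤ M := (norm_nonneg _).trans (hM 0 (mem_closedBall_self hr₀.le))
  obtain ⟨r, hr, hrσ, hrr₀⟩ : ∃ r > 0, 3 * r ≤ σ ∧ 18 * r ≤ r₀ :=
    ⟨min σ r₀ / 18, by positivity, by linarith [min_le_left σ r₀], by linarith [min_le_right σ r₀]⟩
  have hsub : ball (0 : E) (3 * (2 * (3 * r))) ⊆ closedBall 0 r₀ :=
    ball_subset_closedBall.trans (closedBall_subset_closedBall (by linarith))
  have hsub' : closedBall (0 : E) (3 * r) ⊆ closedBall 0 r₀ :=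
    closedBall_subset_closedBall (by linarith)
  obtain ⟨ε₀, hε₀, hconf⟩ := exists_forall_iterate_mem_ball_of_isPeriodicPt (ρ := r)
    (NeZero.pos q) (by positivity) (by positivity : 0 ≤ M / (2 * (3 * r)))
    (fun a ha b hb ↦ Complex.dist_le_div_mul_dist_of_forall_norm_le (hf.mono hsub)
      (fun z hz ↦ hM z (hsub hz)) hb ha) (hcont.mono hsub')
    fun y hy hyq ↦ hfix y (hsub' hy) hyq ▸ mem_ball_self hr
  have hfΛ' : ∀ z ∈ ball (0 : E) (3 * r), ‖f z - Λ z‖ ≤ (12 * c)⁻¹ * ‖z‖ := fun z hz ↦ by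
    simpa [hf0] using hfΛ z (ball_subset_ball hrσ hz)
  refine ⟨3 * r, by positivity, by linarith, min ε₀ (r / (4 * c)), by positivity,
    fun g hg hgf x hx hxq ↦ ?_⟩
  refine hxq.isPeriodicPt_of_cycleDefect_bound _ hc.le (by positivity) hcycle hd
    (hconf g (fun z hz ↦ (hgf z hz).trans (min_le_left _ _)) x hx hxq)
    (fun a ha b hb ↦ Complex.dist_sub_sub_le_mul_dist hr (by positivity) hg hfΛ'
      (fun z hz ↦ (hgf z hz).trans (min_le_right _ _)) ha hb) ?_
  field_simp
  norm_num

theorem stmt_12_general (n : ℕ) (q : ℕ) (hq : 2 ≤ q)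
    (U : Set (EuclideanSpace ℂ (Fin n)))
    (f : EuclideanSpace ℂ (Fin n) → EuclideanSpace ℂ (Fin n))
    (hf : DifferentiableOn ℂ f U) (hf0 : f 0 = 0)
    (Λ : EuclideanSpace ℂ (Fin n) →L[ℂ] EuclideanSpace ℂ (Fin n)) (hΛ : Λ = fderiv ℂ f 0)
    (hr0 : ∃ r₀ > (0 : ℝ), closedBall (0 : EuclideanSpace ℂ (Fin n)) r₀ ⊆ U ∧
      (∀ x ∈ closedBall (0 : EuclideanSpace ℂ (Fin n)) r₀, ∀ j < q, f^[j] x ∈ U) ∧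
      (∀ x ∈ closedBall (0 : EuclideanSpace ℂ (Fin n)) r₀, f x = x → x = 0) ∧
      (∀ x ∈ closedBall (0 : EuclideanSpace ℂ (Fin n)) r₀, f^[q] x = x → x = 0))
    (hnoper : ¬ ∃ v : EuclideanSpace ℂ (Fin n), v ≠ 0 ∧ (Λ ^ q) v = v ∧
      ∀ p : ℕ, 0 < p → p < q → (Λ ^ p) v ≠ v) :
    ∃ r > (0 : ℝ), closedBall (0 : EuclideanSpace ℂ (Fin n)) r ⊆ U ∧
      ∃ ε > (0 : ℝ), ∀ g : EuclideanSpace ℂ (Fin n) → EuclideanSpace ℂ (Fin n),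
        DifferentiableOn ℂ g U →
        (∀ z ∈ ball (0 : EuclideanSpace ℂ (Fin n)) r, ‖g z - f z‖ < ε) →
        ¬ ∃ x ∈ ball (0 : EuclideanSpace ℂ (Fin n)) r,
            (∀ j < q, g^[j] x ∈ ball (0 : EuclideanSpace ℂ (Fin n)) r) ∧
            g^[q] x = x ∧ ∀ p : ℕ, 0 < p → p < q → g^[p] x ≠ x := by
  obtain ⟨r₀, hr₀, hball, hiter, -, hfixq⟩ := hr0
  have : NeZero q := ⟨by omega⟩
  simp only [FunLike.coe_pow_eq_iterate] at hnoper
  obtain ⟨d, hd, hfix⟩ := Module.End.exists_mem_properDivisors_forall_isPeriodicPt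
    (Λ : EuclideanSpace ℂ (Fin n) →ₗ[ℂ] EuclideanSpace ℂ (Fin n)) hq fun v hv hvq ↦ hnoper
      ⟨v, hv, hvq ▸ iterate_minimalPeriod, fun p hp hpq hpv ↦
        (hvq ▸ IsPeriodicPt.minimalPeriod_le hp hpv).not_gt hpq⟩
  obtain ⟨hdq, hdlt⟩ := Nat.mem_properDivisors.1 hd
  have hker := Module.End.ker_cycleDefect_inf_ker_strideSum _ hdq hfix
  obtain ⟨c, hc, hcycle⟩ := LinearMap.exists_norm_le_mul_norm_of_ker_inf_ker_eq_bot _ _ hker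
  have hfΛ : HasFDerivAt f Λ 0 := hΛ ▸ (hf.differentiableAt
    (Filter.mem_of_superset (closedBall_mem_nhds 0 hr₀) hball)).hasFDerivAt
  obtain ⟨r, hr, hrr₀, ε, hε, hper⟩ := exists_forall_isPeriodicPt_of_dist_le hr₀ hc
    (hf.mono hball) hf0 hfΛ (hf.continuousOn.iterate_of_forall_iterate_mem hiter) hfixq hcycle hdq
  have hrU : closedBall 0 r ⊆ U := (closedBall_subset_closedBall hrr₀).trans hball
  refine ⟨r, hr, hrU, ε, hε, fun g hg hgf ⟨x, _, hx, hxq, hxmin⟩ ↦ ?_⟩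
  exact hxmin d (Nat.pos_of_dvd_of_pos hdq (by omega)) hdlt <| hper g
    (hg.mono (ball_subset_closedBall.trans hrU))
    (fun z hz ↦ (dist_eq_norm _ _).trans_le (hgf z hz).le) x hx hxq

/-- Shub–Sullivan / Chow–Mallet-Paret–Yorke direction of Theorem 1.2
(case `q ≥ 2`): if the linear part `Λ = Df(0)` of a holomorphic germ `f`
fixing `0`, with `0` an isolated fixed point of `f` and of `f^q`, has no
periodic point of minimal period `q`, then all sufficiently small holomorphic
perturbations of `f` have no periodic orbit of minimal period `q` contained
in a suitable ball around `0`. -/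
theorem stmt_12 (n : ℕ) (hn : 1 ≤ n) (q : ℕ) (hq : 2 ≤ q)
    (U : Set (EuclideanSpace ℂ (Fin n))) (hU : IsOpen U) (h0U : (0 : EuclideanSpace ℂ (Fin n)) ∈ U)
    (f : EuclideanSpace ℂ (Fin n) → EuclideanSpace ℂ (Fin n))
    (hf : DifferentiableOn ℂ f U) (hf0 : f 0 = 0)
    (Λ : EuclideanSpace ℂ (Fin n) →L[ℂ] EuclideanSpace ℂ (Fin n)) (hΛ : Λ = fderiv ℂ f 0)
    (hr0 : ∃ r₀ > (0 : ℝ), closedBall (0 : EuclideanSpace ℂ (Fin n)) r₀ ⊆ U ∧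
      (∀ x ∈ closedBall (0 : EuclideanSpace ℂ (Fin n)) r₀, ∀ j < q, f^[j] x ∈ U) ∧
      (∀ x ∈ closedBall (0 : EuclideanSpace ℂ (Fin n)) r₀, f x = x → x = 0) ∧
      (∀ x ∈ closedBall (0 : EuclideanSpace ℂ (Fin n)) r₀, f^[q] x = x → x = 0))
    (hnoper : ¬ ∃ v : EuclideanSpace ℂ (Fin n), v ≠ 0 ∧ (Λ ^ q) v = v ∧
      ∀ p : ℕ, 0 < p → p < q → (Λ ^ p) v ≠ v) :
    ∃ r > (0 : ℝ), closedBall (0 : EuclideanSpace ℂ (Fin n)) r ⊆ U ∧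
      ∃ ε > (0 : ℝ), ∀ g : EuclideanSpace ℂ (Fin n) → EuclideanSpace ℂ (Fin n),
        DifferentiableOn ℂ g U →
        (∀ z ∈ ball (0 : EuclideanSpace ℂ (Fin n)) r, ‖g z - f z‖ < ε) →
        ¬ ∃ x ∈ ball (0 : EuclideanSpace ℂ (Fin n)) r,
            (∀ j < q, g^[j] x ∈ ball (0 : EuclideanSpace ℂ (Fin n)) r) ∧
            g^[q] x = x ∧ ∀ p : ℕ, 0 < p → p < q → g^[p] x ≠ x :=
  stmt_12_general n q hq U f hf hf0 Λ hΛ hr0 hnoper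
end

section
/- Let n ≥ 1, let U ⊆ ℂ^n be open with 0 ∈ U, and let f : ℂ^n → ℂ^n be holomorphic on U with f(0) = 0 and derivative Λ = Df(0) at 0. Assume 0 is an isolated fixed point of f, i.e. there is r₀ > 0 with B̄(0, r₀) ⊆ U on which 0 is the unique fixed point of f. Then the following are equivalent: (i) 1 is an eigenvalue of Λ, i.e. there exists v ≠ 0 with Λv = v; (ii) for every r > 0 such that B̄(0, r) ⊆ U and 0 is the unique fixed point of f in B̄(0, r), and for every ε > 0, there exists a map g : ℂ^n → ℂ^n holomorphic on U with sup_{z ∈ B(0,r)} ‖g(z) − f(z)‖ < ε which has at least two distinct fixed points in B(0, r). -/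
/-!
If `Λ v = v`, then `f (t • v) - t • v = o(t)`; adding to `f` a rank-one linear map that sends
`a = t • v` to `a - f a` (its norm is `‖a - f a‖ / ‖a‖`, by Hahn–Banach) gives a perturbation
as small as we like that fixes both `0` and `a`.

If `1` is not an eigenvalue, `id - f` has injective derivative at `0`, and since holomorphic maps
are strictly differentiable it is expanding near `0`: `‖x - y‖ ≤ K ‖(x - f x) - (y - f y)‖`.
A fixed point `x` of a perturbation `g` with `‖g - f‖ ≤ ε` on `B(0, ρ)` solves
`x - f x = (g - f) x`, so it lies in `B(0, K ε)`. There the Cauchy estimates (Schwarz lemma) make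
`g - f` Lipschitz with constant `4 ε / ρ`, and expansion forces two fixed points to coincide as
soon as `4 K ε < ρ`.
-/

open Function Filter Metric Topology

section Perturbation

variable {𝕜 E F : Type*} [RCLike 𝕜] [NormedAddCommGroup E] [NormedSpace 𝕜 E]
  [NormedAddCommGroup F] [NormedSpace 𝕜 F]

theorem exists_continuousLinearMap_apply_eq {a : E} (ha : a ≠ 0) (w : F) :
    ∃ ℓ : E →L[𝕜] F, ℓ a = w ∧ ‖ℓ‖ ≤ ‖w‖ / ‖a‖ := by
  obtain ⟨φ, hφ, hφa⟩ := exists_dual_vector 𝕜 a (norm_ne_zero_iff.2 ha)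
  have ha' : (‖a‖ : 𝕜) ≠ 0 := by exact_mod_cast norm_ne_zero_iff.2 ha
  refine ⟨((‖a‖⁻¹ : 𝕜) • φ).smulRight w, ?_, ?_⟩
  · simp [hφa, ha']
  · rw [ContinuousLinearMap.norm_smulRight_apply, norm_smul, hφ, norm_inv, RCLike.norm_ofReal,
      abs_norm, mul_one, inv_mul_eq_div]

theorem HasFDerivAt.exists_norm_sub_le_of_apply_eq_self {f : E → E} {Λ : E →L[𝕜] E}
    (hf : HasFDerivAt f Λ 0) (hf0 : f 0 = 0) {v : E} (hv : v ≠ 0) (hΛv : Λ v = v)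
    {c R : ℝ} (hc : 0 < c) (hR : 0 < R) : ∃ a ≠ 0, ‖a‖ < R ∧ ‖f a - a‖ ≤ c * ‖a‖ := by
  have hnear : ∀ᶠ x in 𝓝 0, ‖f x - Λ x‖ ≤ c * ‖x‖ ∧ ‖x‖ < R := by
    have hsmall := hf.isLittleO.def hc
    simp only [hf0, sub_zero] at hsmall
    filter_upwards [hsmall, ball_mem_nhds (0 : E) hR] with x hx hxR
    exact ⟨hx, mem_ball_zero_iff.1 hxR⟩
  have hray : Tendsto (fun t : 𝕜 => t • v) (𝓝[≠] 0) (𝓝 0) := by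
    simpa using ((tendsto_id (x := 𝓝 (0 : 𝕜))).smul_const v).mono_left nhdsWithin_le_nhds
  obtain ⟨t, ht, ht0⟩ := ((hray.eventually hnear).and self_mem_nhdsWithin).exists
  refine ⟨t • v, smul_ne_zero ht0 hv, ht.2, ?_⟩
  simpa [hΛv] using ht.1

theorem HasFDerivAt.exists_small_perturbation_fixing_ne_zero {f : E → E} {Λ : E →L[𝕜] E}
    (hf : HasFDerivAt f Λ 0) (hf0 : f 0 = 0) {v : E} (hv : v ≠ 0) (hΛv : Λ v = v)
    {r ε : ℝ} (hr : 0 < r) (hε : 0 < ε) :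
    ∃ ℓ : E →L[𝕜] E, (∀ z ∈ ball 0 r, ‖ℓ z‖ < ε) ∧ ∃ a ∈ ball 0 r, a ≠ 0 ∧ f a + ℓ a = a := by
  obtain ⟨a, ha0, har, hfa⟩ :=
    hf.exists_norm_sub_le_of_apply_eq_self hf0 hv hΛv (c := ε / (2 * r)) (by positivity) hr
  obtain ⟨ℓ, hℓa, hℓ⟩ := exists_continuousLinearMap_apply_eq (𝕜 := 𝕜) ha0 (a - f a)
  have hℓ' : ‖ℓ‖ ≤ ε / (2 * r) := by
    refine hℓ.trans (div_le_of_le_mul₀ (norm_nonneg _) (by positivity) ?_)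
    rwa [norm_sub_rev]
  refine ⟨ℓ, fun z hz => ?_, a, mem_ball_zero_iff.2 har, ha0, by rw [hℓa]; abel⟩
  rw [mem_ball_zero_iff] at hz
  calc ‖ℓ z‖ ≤ ‖ℓ‖ * ‖z‖ := ℓ.le_opNorm z
    _ ≤ ε / (2 * r) * r := by gcongr
    _ < ε := by field_simp; linarith

end Perturbation

section StrictDerivative

variable {𝕜 E F : Type*} [NontriviallyNormedField 𝕜] [CompleteSpace 𝕜]
  [NormedAddCommGroup E] [NormedSpace 𝕜 E] [FiniteDimensional 𝕜 E]
  [NormedAddCommGroup F] [NormedSpace 𝕜 F]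

theorem HasStrictFDerivAt.exists_norm_sub_le_mul_norm_sub {h : E → F} {A : E →L[𝕜] F} {a : E}
    (hh : HasStrictFDerivAt h A a) (hA : Injective A) :
    ∃ K > 0, ∃ δ > 0, ∀ x ∈ ball a δ, ∀ y ∈ ball a δ, ‖x - y‖ ≤ K * ‖h x - h y‖ := by
  obtain ⟨K, hK, hKA⟩ := (A : E →ₗ[𝕜] F).injective_iff_antilipschitz.1 hA
  have hK' : (0 : ℝ) < K := hK
  obtain ⟨δ, hδ, hδh⟩ := eventually_nhds_iff_ball.1
    (hasStrictFDerivAt_iff_isLittleO.1 hh |>.def (c := (2 * (K : ℝ))⁻¹) (by positivity))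
  refine ⟨2 * (K : ℝ), by positivity, δ, hδ, fun x hx y hy => ?_⟩
  have happrox := hδh (x, y) (by simpa [← ball_prod_same] using And.intro hx hy)
  have hAxy : ‖x - y‖ ≤ K * ‖A (x - y)‖ := A.bound_of_antilipschitz hKA (x - y)
  have htri : ‖A (x - y)‖ ≤ ‖h x - h y‖ + ‖h x - h y - A (x - y)‖ := by
    simpa using norm_sub_le (h x - h y) (h x - h y - A (x - y))
  dsimp only at happrox
  have : ‖x - y‖ ≤ K * ‖h x - h y‖ + ‖x - y‖ / 2 := calc
    ‖x - y‖ ≤ K * ‖A (x - y)‖ := hAxy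
    _ ≤ K * (‖h x - h y‖ + (2 * (K : ℝ))⁻¹ * ‖x - y‖) := by gcongr; linarith
    _ = K * ‖h x - h y‖ + ‖x - y‖ / 2 := by field_simp
  linarith

end StrictDerivative

section Holomorphic

variable {E F : Type*} [NormedAddCommGroup E] [NormedSpace ℂ E]
  [NormedAddCommGroup F] [NormedSpace ℂ F]

theorem Complex.norm_sub_le_of_norm_le_on_ball {φ : E → F} {c : E} {ρ M : ℝ}
    (hd : DifferentiableOn ℂ φ (ball c ρ)) (hM : ∀ x ∈ ball c ρ, ‖φ x‖ ≤ M)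
    {z w : E} (hz : z ∈ ball c (ρ / 4)) (hw : w ∈ ball c (ρ / 4)) :
    ‖φ z - φ w‖ ≤ 4 * M / ρ * ‖z - w‖ := by
  rw [mem_ball] at hz hw
  have hρ : 0 < ρ := by linarith [dist_nonneg (x := w) (y := c)]
  have hsub : ball w (ρ / 2) ⊆ ball c ρ := ball_subset_ball' (by linarith)
  have hmaps : Set.MapsTo φ (ball w (ρ / 2)) (closedBall (φ w) (2 * M)) := fun x hx => by
    rw [mem_closedBall, dist_eq_norm]
    linarith [norm_sub_le (φ x) (φ w), hM x (hsub hx), hM w (hsub (mem_ball_self (by linarith)))]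
  have hzw : z ∈ ball w (ρ / 2) := by
    rw [mem_ball]; linarith [dist_triangle_right z w c]
  have := Complex.dist_le_div_mul_dist_of_mapsTo_ball (hd.mono hsub) hmaps hzw
  rw [dist_eq_norm, dist_eq_norm] at this
  convert this using 2
  field_simp
  ring

theorem DifferentiableOn.hasStrictFDerivAt {f : E → F} {s : Set E} {a : E}
    (hf : DifferentiableOn ℂ f s) (hs : s ∈ 𝓝 a) : HasStrictFDerivAt f (fderiv ℂ f a) a := by
  set Λ := fderiv ℂ f a
  set ψ : E → F := fun x => f x - f a - Λ (x - a)
  have hψ : DifferentiableOn ℂ ψ s := by fun_prop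
  -- The Cauchy estimate upgrades the bound `‖ψ x‖ ≤ c/4 ‖x - a‖` near `a` to a Lipschitz bound.
  rw [hasStrictFDerivAt_iff_isLittleO]
  refine Asymptotics.IsLittleO.of_bound fun c hc => ?_
  obtain ⟨δ, hδ, hδs⟩ := eventually_nhds_iff_ball.1 <| Eventually.and hs <|
    (hf.differentiableAt hs).hasFDerivAt.isLittleO.def (c := c / 4) (by positivity)
  have hψδ : ∀ x ∈ ball a δ, ‖ψ x‖ ≤ c / 4 * δ := fun x hx => by
    refine (hδs x hx).2.trans ?_
    gcongr
    exact (mem_ball_iff_norm.1 hx).le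
  filter_upwards [prod_mem_nhds (ball_mem_nhds a (by positivity : 0 < δ / 4))
    (ball_mem_nhds a (by positivity : 0 < δ / 4))] with p ⟨hp₁, hp₂⟩
  have := Complex.norm_sub_le_of_norm_le_on_ball (hψ.mono fun x hx => (hδs x hx).1) hψδ hp₁ hp₂
  have hψsub : ψ p.1 - ψ p.2 = f p.1 - f p.2 - Λ (p.1 - p.2) := by
    simp only [ψ, map_sub]; abel
  rw [hψsub] at this
  convert this using 2
  field_simp

theorem subsingleton_ball_inter_fixedPoints {f g : E → E} {ρ K ε : ℝ} (hK : 0 ≤ K)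
    (hexp : ∀ x ∈ ball (0 : E) ρ, ∀ y ∈ ball (0 : E) ρ, ‖x - y‖ ≤ K * ‖(x - f x) - (y - f y)‖)
    (hf0 : f 0 = 0) (hgf : DifferentiableOn ℂ (g - f) (ball 0 ρ))
    (hε : ∀ x ∈ ball 0 ρ, ‖g x - f x‖ ≤ ε) (hKε : 4 * K * ε < ρ) :
    (ball 0 ρ ∩ fixedPoints g).Subsingleton := by
  intro x hx y hy
  have hρ : 0 < ρ := pos_of_mem_ball hx.1
  have hsub : ∀ z ∈ ball 0 ρ ∩ fixedPoints g, z - f z = g z - f z := fun z hz => by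
    rw [hz.2.eq]
  have hloc : ∀ z ∈ ball 0 ρ ∩ fixedPoints g, z ∈ ball (0 : E) (ρ / 4) := fun z hz => by
    have := hexp z hz.1 0 (mem_ball_self hρ)
    rw [hf0, sub_zero, sub_zero, sub_zero, hsub z hz] at this
    rw [mem_ball_zero_iff]
    nlinarith [hε z hz.1]
  have hlip := Complex.norm_sub_le_of_norm_le_on_ball hgf hε (hloc x hx) (hloc y hy)
  have hxy := hexp x hx.1 y hy.1
  rw [hsub x hx, hsub y hy] at hxy
  have hcontr : ‖x - y‖ ≤ 4 * K * ε / ρ * ‖x - y‖ := calc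
    ‖x - y‖ ≤ K * (4 * ε / ρ * ‖x - y‖) := hxy.trans (by gcongr; exact hlip)
    _ = 4 * K * ε / ρ * ‖x - y‖ := by ring
  have hq : 4 * K * ε / ρ < 1 := (div_lt_one hρ).2 hKε
  have : ‖x - y‖ = 0 := by nlinarith [norm_nonneg (x - y)]
  exact sub_eq_zero.1 (norm_eq_zero.1 this)

end Holomorphic

theorem stmt_13_general (n : ℕ)
    (U : Set (EuclideanSpace ℂ (Fin n)))
    (f : EuclideanSpace ℂ (Fin n) → EuclideanSpace ℂ (Fin n))
    (hf : DifferentiableOn ℂ f U) (hf0 : f 0 = 0)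
    (Λ : EuclideanSpace ℂ (Fin n) →L[ℂ] EuclideanSpace ℂ (Fin n)) (hΛ : Λ = fderiv ℂ f 0)
    (hiso : ∃ r₀ > (0 : ℝ), closedBall (0 : EuclideanSpace ℂ (Fin n)) r₀ ⊆ U ∧
      ∀ x ∈ closedBall (0 : EuclideanSpace ℂ (Fin n)) r₀, f x = x → x = 0) :
    (∃ v : EuclideanSpace ℂ (Fin n), v ≠ 0 ∧ Λ v = v) ↔
      (∀ r > (0 : ℝ), closedBall (0 : EuclideanSpace ℂ (Fin n)) r ⊆ U →
        (∀ x ∈ closedBall (0 : EuclideanSpace ℂ (Fin n)) r, f x = x → x = 0) →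
        ∀ ε > (0 : ℝ), ∃ g : EuclideanSpace ℂ (Fin n) → EuclideanSpace ℂ (Fin n),
          DifferentiableOn ℂ g U ∧
          (∀ z ∈ ball (0 : EuclideanSpace ℂ (Fin n)) r, ‖g z - f z‖ < ε) ∧
          ∃ x ∈ ball (0 : EuclideanSpace ℂ (Fin n)) r,
            ∃ y ∈ ball (0 : EuclideanSpace ℂ (Fin n)) r,
              x ≠ y ∧ g x = x ∧ g y = y) := by
  obtain ⟨r₀, hr₀, hr₀U, hr₀iso⟩ := hiso
  have hΛf : HasStrictFDerivAt f Λ 0 :=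
    hΛ ▸ hf.hasStrictFDerivAt (mem_of_superset (closedBall_mem_nhds 0 hr₀) hr₀U)
  constructor
  · rintro ⟨v, hv, hΛv⟩ r hr - - ε hε
    obtain ⟨ℓ, hℓ, a, ha, ha0, hfa⟩ :=
      hΛf.hasFDerivAt.exists_small_perturbation_fixing_ne_zero hf0 hv hΛv hr hε
    exact ⟨fun z => f z + ℓ z, hf.add ℓ.differentiableOn, by simpa using hℓ,
      a, ha, 0, mem_ball_self hr, ha0, hfa, by simp [hf0]⟩
  · intro hpert
    by_contra! hno
    have hA : Injective (ContinuousLinearMap.id ℂ (EuclideanSpace ℂ (Fin n)) - Λ) :=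
      (injective_iff_map_eq_zero _).2 fun v hv =>
        by_contra fun hv0 => hno v hv0 (sub_eq_zero.1 hv).symm
    obtain ⟨K, hK, δ, hδ, hexp⟩ :=
      ((hasStrictFDerivAt_id 0).sub hΛf).exists_norm_sub_le_mul_norm_sub hA
    set ρ := min δ r₀
    have hρ : 0 < ρ := lt_min hδ hr₀
    have hρr₀ : closedBall (0 : EuclideanSpace ℂ (Fin n)) ρ ⊆ closedBall 0 r₀ :=
      closedBall_subset_closedBall (min_le_right _ _)
    obtain ⟨g, hg, hgf, x, hx, y, hy, hxy, hgx, hgy⟩ :=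
      hpert ρ hρ (hρr₀.trans hr₀U) (fun x hx => hr₀iso x (hρr₀ hx))
        (ρ / (8 * K)) (by positivity)
    have hρδ : ball (0 : EuclideanSpace ℂ (Fin n)) ρ ⊆ ball 0 δ :=
      ball_subset_ball (min_le_left _ _)
    refine hxy (subsingleton_ball_inter_fixedPoints hK.le
      (fun x hx y hy => hexp x (hρδ hx) y (hρδ hy)) hf0
      ((hg.sub hf).mono (ball_subset_closedBall.trans (hρr₀.trans hr₀U)))
      (fun z hz => (hgf z hz).le) ?_ ⟨hx, hgx⟩ ⟨hy, hgy⟩)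
    field_simp
    linarith

/-- The `q = 1` case of Theorem 1.2: for a holomorphic germ `f` fixing `0`,
with `0` an isolated fixed point, `1` is an eigenvalue of `Λ = Df(0)` if and
only if for every isolating closed ball `B̄(0, r) ⊆ U` and every `ε > 0` there
is a holomorphic map `g` on `U`, `ε`-close to `f` on `B(0, r)`, having at
least two distinct fixed points in `B(0, r)`. -/
theorem stmt_13 (n : ℕ) (hn : 1 ≤ n)
    (U : Set (EuclideanSpace ℂ (Fin n))) (hU : IsOpen U) (h0U : (0 : EuclideanSpace ℂ (Fin n)) ∈ U)
    (f : EuclideanSpace ℂ (Fin n) → EuclideanSpace ℂ (Fin n))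
    (hf : DifferentiableOn ℂ f U) (hf0 : f 0 = 0)
    (Λ : EuclideanSpace ℂ (Fin n) →L[ℂ] EuclideanSpace ℂ (Fin n)) (hΛ : Λ = fderiv ℂ f 0)
    (hiso : ∃ r₀ > (0 : ℝ), closedBall (0 : EuclideanSpace ℂ (Fin n)) r₀ ⊆ U ∧
      ∀ x ∈ closedBall (0 : EuclideanSpace ℂ (Fin n)) r₀, f x = x → x = 0) :
    (∃ v : EuclideanSpace ℂ (Fin n), v ≠ 0 ∧ Λ v = v) ↔
      (∀ r > (0 : ℝ), closedBall (0 : EuclideanSpace ℂ (Fin n)) r ⊆ U →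
        (∀ x ∈ closedBall (0 : EuclideanSpace ℂ (Fin n)) r, f x = x → x = 0) →
        ∀ ε > (0 : ℝ), ∃ g : EuclideanSpace ℂ (Fin n) → EuclideanSpace ℂ (Fin n),
          DifferentiableOn ℂ g U ∧
          (∀ z ∈ ball (0 : EuclideanSpace ℂ (Fin n)) r, ‖g z - f z‖ < ε) ∧
          ∃ x ∈ ball (0 : EuclideanSpace ℂ (Fin n)) r,
            ∃ y ∈ ball (0 : EuclideanSpace ℂ (Fin n)) r,
              x ≠ y ∧ g x = x ∧ g y = y) :=
  stmt_13_general n U f hf hf0 Λ hΛ hiso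
end
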